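/- arXiv:2410.05070 — 3 statements merged into one kernel-verified Lean document; each statement's English description precedes it below -/
import Mathlib

section
/- Let $W$ be the Weyl group of a crystallographic root system with simple reflections $s_1,\dots,s_n$, and let $w_0$ be the longest element of $W$. Let $j \in [n]$, $W_j = \langle s_i \mid i \neq j\rangle$, $w_{0,j}$ the longest element of $W_j$, $w^j$ the minimal coset representative of $w_0 W_j$, and $w''$ the minimal coset representative of $w_{0,j} s_j W_j$. Then $w' := w^j (w'')^{-1}$ is itself a minimal-length coset representative in $W/W_j$, i.e., $\ell(w' s_i) = \ell(w') + 1$ for every $i \neq j$. -/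
namespace Stmt4Aux
open CoxeterSystem List

variable {B : Type*} {M : CoxeterMatrix B} {W : Type*} [Group W] (cs : CoxeterSystem M W)

local prefix:100 "s" => cs.simple
local prefix:100 "π" => cs.wordProd
local prefix:100 "ℓ" => cs.length

theorem xor_decide_odd (a : ℕ) (P1 P2 : Prop) [Decidable P1] [Decidable P2] (ε : Bool) :
    xor (decide P2) (xor (decide P1) (xor (decide (Odd a)) ε))
      = xor (decide (Odd (a + (if P1 then 1 else 0) + (if P2 then 1 else 0)))) ε := by
  by_cases h1 : P1 <;> by_cases h2 : P2 <;> by_cases h3 : Odd a <;>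
    simp [h1, h2, h3, Nat.odd_add_one, Bool.xor_assoc]

theorem conj_eq_iff (g x y : W) : g * x * g⁻¹ = y ↔ x = g⁻¹ * y * g := by
  constructor
  · intro h; rw [← h]; group
  · intro h; rw [h]; group

open Classical in
noncomputable def eta (i : B) : Equiv.Perm (W × Bool) := by
  refine Function.Involutive.toPerm
    (fun x => (s i * x.1 * s i, xor (decide (x.1 = s i)) x.2)) (fun x => ?_)
  have h : s i * (s i * x.1 * s i) * s i = x.1 := by
    simp [← mul_assoc, cs.simple_mul_simple_self i]
  have h2 : (s i * x.1 * s i = s i) = (x.1 = s i) := by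
    refine propext ⟨fun h' => ?_, fun h' => by rw [h']; simp [cs.simple_mul_simple_self i]⟩
    have := congrArg (fun y => s i * y * s i) h'
    simpa [← mul_assoc, cs.simple_mul_simple_self i] using this
  ext
  · exact h
  · simp [h2, ← Bool.xor_assoc]

open Classical in
theorem eta_apply (i : B) (x : W × Bool) :
    eta cs i x = (s i * x.1 * s i, xor (decide (x.1 = s i)) x.2) := rfl

open Classical in
theorem eta_liftable : M.IsLiftable (fun i => eta cs i) := by
  intro i j
  set p := s i * s j with hp
  have hpinv : p⁻¹ = s j * s i := by rw [hp, mul_inv_rev, cs.inv_simple, cs.inv_simple]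
  have hconj : ∀ k : ℕ, s j * (p⁻¹) ^ k * s j = p ^ k := by
    intro k
    have h1 : s j * p⁻¹ * s j = p := by
      rw [hpinv, hp, ← mul_assoc, cs.simple_mul_simple_self j, one_mul]
    calc s j * (p⁻¹) ^ k * s j = (s j * p⁻¹ * (s j)⁻¹) ^ k := by
          rw [conj_pow, cs.inv_simple]
      _ = p ^ k := by rw [cs.inv_simple, h1]
  have hpk : ∀ k : ℕ, (p ^ k)⁻¹ = s j * p ^ k * s j := by
    intro k
    calc (p ^ k)⁻¹ = (p⁻¹) ^ k := (inv_pow p k).symm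
      _ = s j * (s j * (p⁻¹) ^ k * s j) * s j := by
          simp [mul_assoc, cs.simple_mul_simple_cancel_left]
      _ = s j * p ^ k * s j := by rw [hconj k]
  have key1 : ∀ k : ℕ, (p ^ k)⁻¹ * s j * p ^ k = s j * p ^ (2 * k) := by
    intro k
    rw [hpk k]
    calc s j * p ^ k * s j * s j * p ^ k = s j * (p ^ k * (s j * (s j * p ^ k))) := by
          simp [mul_assoc]
      _ = s j * (p ^ k * p ^ k) := by rw [cs.simple_mul_simple_cancel_left]
      _ = s j * p ^ (2 * k) := by rw [← pow_add, two_mul]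
  have key2 : ∀ k : ℕ, (p ^ k)⁻¹ * (s j * s i * s j) * p ^ k = s j * p ^ (2 * k + 1) := by
    intro k
    have hjij : s j * s i * s j = p⁻¹ * s j := by rw [hpinv]
    calc (p ^ k)⁻¹ * (s j * s i * s j) * p ^ k
        = (p ^ (k+1))⁻¹ * s j * p ^ (k+1) * p⁻¹ := by rw [hjij]; group
      _ = s j * p ^ (2 * (k+1)) * p⁻¹ := by rw [key1 (k+1)]
      _ = s j * p ^ (2 * k + 1) := by
          rw [show 2 * (k+1) = (2 * k + 1) + 1 by ring, pow_succ, ← mul_assoc, mul_assoc,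
            mul_inv_cancel, mul_one]
  have hrel : p ^ M i j = 1 := cs.simple_mul_simple_pow i j
  set F : ℕ → W → ℕ :=
    fun k t => (List.range (2 * k)).countP (fun r => decide (t = s j * p ^ r)) with hF
  have key : ∀ (k : ℕ) (t : W) (ε : Bool),
      ((eta cs i * eta cs j) ^ k) (t, ε) = (p ^ k * t * (p ^ k)⁻¹, xor (decide (Odd (F k t))) ε) := by
    intro k
    induction k with
    | zero => intro t ε; simp [hF]
    | succ k ih =>
      intro t ε
      rw [pow_succ']
      rw [Equiv.Perm.mul_apply, ih t ε]
      rw [Equiv.Perm.mul_apply, eta_apply, eta_apply]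
      have c1 : (p ^ k * t * (p ^ k)⁻¹ = s j) ↔ t = s j * p ^ (2 * k) := by
        rw [conj_eq_iff, key1 k]
      have c2 : (s j * (p ^ k * t * (p ^ k)⁻¹) * s j = s i) ↔ t = s j * p ^ (2 * k + 1) := by
        rw [show s j * (p ^ k * t * (p ^ k)⁻¹) * s j = s j * (p ^ k * t * (p ^ k)⁻¹) * (s j)⁻¹ by
          rw [cs.inv_simple], conj_eq_iff, cs.inv_simple, conj_eq_iff, key2 k]
      have hfst : s i * (s j * (p ^ k * t * (p ^ k)⁻¹) * s j) * s i
          = p ^ (k+1) * t * (p ^ (k+1))⁻¹ := by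
        calc s i * (s j * (p ^ k * t * (p ^ k)⁻¹) * s j) * s i
            = (s i * s j) * (p ^ k * t * (p ^ k)⁻¹) * (s j * s i) := by group
          _ = p * (p ^ k * t * (p ^ k)⁻¹) * p⁻¹ := by rw [← hpinv, ← hp]
          _ = p ^ (k+1) * t * (p ^ (k+1))⁻¹ := by group
      have hFsucc : F (k+1) t
          = F k t + ((if t = s j * p ^ (2*k) then 1 else 0) : ℕ)
              + ((if t = s j * p ^ (2*k+1) then 1 else 0) : ℕ) := by
        simp only [hF]
        rw [show 2 * (k+1) = (2*k+1)+1 by ring, List.range_succ, List.range_succ,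
          List.countP_append, List.countP_append]
        simp [List.countP_cons, add_assoc]
      have e1 : decide (p ^ k * t * (p ^ k)⁻¹ = s j) = decide (t = s j * p ^ (2*k)) :=
        decide_eq_decide.mpr c1
      have e2 : decide (s j * (p ^ k * t * (p ^ k)⁻¹) * s j = s i)
          = decide (t = s j * p ^ (2*k+1)) := decide_eq_decide.mpr c2
      ext
      · exact hfst
      · show xor _ (xor _ (xor _ ε)) = _
        rw [e1, e2, hFsucc]
        exact xor_decide_odd _ _ _ ε
  apply Equiv.ext
  rintro ⟨t, ε⟩
  rw [key (M i j) t ε, hrel]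
  have hFeven : ¬ Odd (F (M i j) t) := by
    have h2 : F (M i j) t
        = 2 * ((List.range (M i j)).countP fun r => decide (t = s j * p ^ r)) := by
      simp only [hF, two_mul, List.range_add, List.countP_append, List.countP_map]
      congr 1
      refine List.countP_congr (fun r _ => ?_)
      simp only [Function.comp_apply, pow_add, hrel, one_mul]
    rw [h2]
    simp [Nat.odd_iff, Nat.mul_mod_right]
  simp [hFeven]
open CoxeterSystem List in
section
variable {B : Type*} {M : CoxeterMatrix B} {W : Type*} [Group W] (cs : CoxeterSystem M W)
local prefix:100 "s" => cs.simple
local prefix:100 "π" => cs.wordProd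
local prefix:100 "ℓ" => cs.length

/-- The Tits representation of `W` on `W × Bool`. -/
noncomputable def rho : W →* Equiv.Perm (W × Bool) :=
  CoxeterSystem.lift cs ⟨fun i => eta cs i, eta_liftable cs⟩

theorem rho_simple (i : B) : rho cs (s i) = eta cs i :=
  CoxeterSystem.lift_apply_simple cs (eta_liftable cs) i

/-- The sign cocycle: `N cs w t = true` iff `w` sends the "positive root" of `t` to a
negative root. -/
noncomputable def N (w t : W) : Bool := ((rho cs w) (t, false)).2

open Classical in
theorem rho_apply (w : W) : ∀ (t : W) (ε : Bool),
    (rho cs w) (t, ε) = (w * t * w⁻¹, xor (N cs w t) ε) := by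
  induction w using cs.simple_induction_left with
  | one => intro t ε; simp [N, Prod.ext_iff]
  | mul_simple_left w i ih =>
    intro t ε
    have h1 : rho cs (s i * w) = eta cs i * rho cs w := by rw [map_mul, rho_simple]
    have h2 : ∀ ε', (rho cs (s i * w)) (t, ε')
        = (s i * (w * t * w⁻¹) * s i, xor (decide (w * t * w⁻¹ = s i)) (xor (N cs w t) ε')) := by
      intro ε'
      rw [h1, Equiv.Perm.mul_apply, ih t ε', eta_apply]
    have hN : N cs (s i * w) t = xor (decide (w * t * w⁻¹ = s i)) (N cs w t) := by
      rw [N, h2 false, Bool.xor_false]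
    rw [h2 ε, hN]
    have hfst : s i * (w * t * w⁻¹) * s i = (s i * w) * t * (s i * w)⁻¹ := by
      rw [mul_inv_rev, cs.inv_simple]; group
    rw [hfst, Bool.xor_assoc]

theorem N_mul (w₁ w₂ t : W) :
    N cs (w₁ * w₂) t = xor (N cs w₂ t) (N cs w₁ (w₂ * t * w₂⁻¹)) := by
  have : (rho cs (w₁ * w₂)) (t, false) = (rho cs w₁) ((rho cs w₂) (t, false)) := by
    rw [map_mul, Equiv.Perm.mul_apply]
  rw [N, this, rho_apply cs w₂ t false, rho_apply cs w₁]
  simp [Bool.xor_comm]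

open Classical in
theorem N_simple (i : B) (t : W) : N cs (s i) t = decide (t = s i) := by
  rw [N, rho_simple, eta_apply]
  simp [eq_comm]

theorem N_one (t : W) : N cs 1 t = false := by rw [N]; simp

theorem N_inv (w t : W) : N cs w⁻¹ t = N cs w (w⁻¹ * t * w) := by
  have := N_mul cs w w⁻¹ t
  rw [mul_inv_cancel, N_one] at this
  have h2 : w⁻¹ * t * w⁻¹⁻¹ = w⁻¹ * t * w := by rw [inv_inv]
  rw [h2] at this
  cases h1 : N cs w⁻¹ t <;> cases h2 : N cs w (w⁻¹ * t * w) <;>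
    rw [h1, h2] at this <;> simp_all
end

open CoxeterSystem List in
section
variable {B : Type*} {M : CoxeterMatrix B} {W : Type*} [Group W] (cs : CoxeterSystem M W)
local prefix:100 "s" => cs.simple
local prefix:100 "π" => cs.wordProd
local prefix:100 "ℓ" => cs.length

namespace Stmt4Aux2
open Stmt4Aux

open Classical in
theorem N_wordProd (ω : List B) (t : W) :
    N cs (π ω) t = decide (Odd (List.count t (cs.rightInvSeq ω))) := by
  induction ω with
  | nil => simp [N_one]
  | cons i ω ih =>
    rw [cs.wordProd_cons, N_mul, ih, N_simple]
    have hris : cs.rightInvSeq (i :: ω) = ((π ω)⁻¹ * s i * π ω) :: cs.rightInvSeq ω := rfl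
    rw [hris, List.count_cons]
    have hcond : (π ω * t * (π ω)⁻¹ = s i) ↔ ((π ω)⁻¹ * s i * π ω = t) := by
      rw [conj_eq_iff]
      constructor <;> intro h <;> rw [h] <;> group
    by_cases h : (π ω)⁻¹ * s i * π ω = t <;>
      by_cases h2 : Odd (List.count t (cs.rightInvSeq ω)) <;>
      simp [h, h2, hcond, Nat.odd_add_one]

open Classical in
theorem mem_ris_of_N (ω : List B) (t : W) (h : N cs (π ω) t = true) : t ∈ cs.rightInvSeq ω := by
  rw [N_wordProd] at h
  have := of_decide_eq_true h
  exact List.count_pos_iff.mp this.pos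

theorem N_refl_self {t : W} (ht : cs.IsReflection t) : N cs t t = true := by
  obtain ⟨u, i, rfl⟩ := ht
  have h1 : N cs (u * s i * u⁻¹) (u * s i * u⁻¹)
      = xor (N cs u⁻¹ (u * s i * u⁻¹)) (N cs (u * s i) (u⁻¹ * (u * s i * u⁻¹) * u⁻¹⁻¹)) :=
    N_mul cs (u * s i) u⁻¹ _
  have h2 : u⁻¹ * (u * s i * u⁻¹) * u⁻¹⁻¹ = s i := by group
  have h3 : N cs u⁻¹ (u * s i * u⁻¹) = N cs u (s i) := by
    rw [N_inv]; congr 1; group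
  rw [h2, h3] at h1
  have h4 : N cs (u * s i) (s i) = xor (N cs (s i) (s i)) (N cs u (s i * s i * (s i)⁻¹)) :=
    N_mul cs u (s i) _
  have h5 : s i * s i * (s i)⁻¹ = s i := by group
  have h6 : N cs (s i) (s i) = true := by rw [N_simple]; simp
  rw [h5, h6] at h4
  rw [h1, h4]
  cases N cs u (s i) <;> simp

theorem N_lt (w t : W) (h : N cs w t = true) : ℓ (w * t) < ℓ w := by
  obtain ⟨ω, hω, rfl⟩ := cs.exists_reduced_word' w
  exact (cs.isRightInversion_of_mem_rightInvSeq hω (mem_ris_of_N cs ω t h)).2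

theorem N_iff {t : W} (ht : cs.IsReflection t) (w : W) :
    N cs w t = true ↔ ℓ (w * t) < ℓ w := by
  constructor
  · exact N_lt cs w t
  · intro h
    by_contra hN
    have hN' : N cs w t = false := by simpa using hN
    have h1 : N cs (w * t) t = xor (N cs t t) (N cs w (t * t * t⁻¹)) := N_mul cs w t t
    have h2 : t * t * t⁻¹ = t := by rw [ht.mul_self, one_mul, ht.inv]
    rw [h2, N_refl_self cs ht, hN'] at h1
    have h3 : ℓ (w * t * t) < ℓ (w * t) := N_lt cs (w * t) t (by simpa using h1)
    rw [mul_assoc, ht.mul_self, mul_one] at h3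
    omega

theorem mem_lis_of_isLeftInversion {ω : List B} (hω : cs.IsReduced ω) {t : W}
    (ht : cs.IsReflection t) (h : ℓ (t * π ω) < ℓ (π ω)) : t ∈ cs.leftInvSeq ω := by
  have h1 : ℓ ((π ω)⁻¹ * t) < ℓ ((π ω)⁻¹) := by
    rw [cs.length_inv]
    calc ℓ ((π ω)⁻¹ * t) = ℓ (((π ω)⁻¹ * t)⁻¹) := (cs.length_inv _).symm
      _ = ℓ (t⁻¹ * π ω) := by rw [mul_inv_rev, inv_inv]
      _ = ℓ (t * π ω) := by rw [ht.inv]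
      _ < ℓ (π ω) := h
  have h2 : N cs ((π ω)⁻¹) t = true := by
    rw [N_iff cs ht]; exact h1
  have h3 : (π ω)⁻¹ = π ω.reverse := (cs.wordProd_reverse ω).symm
  rw [h3] at h2
  have h4 := mem_ris_of_N cs ω.reverse t h2
  rw [cs.rightInvSeq_reverse] at h4
  simpa using h4

end Stmt4Aux2
end

open CoxeterSystem List in
section
variable {B : Type*} {M : CoxeterMatrix B} {W : Type*} [Group W] (cs : CoxeterSystem M W)
local prefix:100 "s" => cs.simple
local prefix:100 "π" => cs.wordProd
local prefix:100 "ℓ" => cs.length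

namespace Stmt4Aux3
open Stmt4Aux Stmt4Aux2

theorem deletion {ω : List B} (h : ¬ cs.IsReduced ω) :
    ∃ ω', ω' <+ ω ∧ ω'.length + 2 = ω.length ∧ π ω' = π ω := by
  induction ω with
  | nil => exact absurd (by simp [CoxeterSystem.IsReduced]) h
  | cons i ω₁ ih =>
    by_cases hred : cs.IsReduced ω₁
    · rcases cs.length_simple_mul (π ω₁) i with h1 | h1
      · exact absurd (by rw [CoxeterSystem.IsReduced, cs.wordProd_cons, h1, hred]; simp) h
      · have hlt : ℓ (s i * π ω₁) < ℓ (π ω₁) := by omega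
        have hmem := mem_lis_of_isLeftInversion cs hred (cs.isReflection_simple i) hlt
        obtain ⟨k, hk, hget⟩ := List.mem_iff_getElem.mp hmem
        have hk' : k < ω₁.length := by simpa using hk
        have hgetD : (cs.leftInvSeq ω₁).getD k 1 = s i := by
          rw [List.getD_eq_getElem _ 1 hk, hget]
        have hprod : π (ω₁.eraseIdx k) = π (i :: ω₁) := by
          rw [← cs.getD_leftInvSeq_mul_wordProd, hgetD, cs.wordProd_cons]
        refine ⟨ω₁.eraseIdx k, (List.eraseIdx_sublist ω₁ k).cons i, ?_, hprod⟩
        have := List.length_eraseIdx_add_one hk'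
        simp only [List.length_cons]
        omega
    · obtain ⟨ω', hsub, hlen, hprod⟩ := ih hred
      refine ⟨i :: ω', hsub.cons₂ i, by simpa using hlen, ?_⟩
      rw [cs.wordProd_cons, cs.wordProd_cons, hprod]

variable (J : Set B)

theorem wordProd_mem_WJ {ω : List B} (hω : ∀ i ∈ ω, i ∈ J) :
    π ω ∈ Subgroup.closure (cs.simple '' J) := by
  induction ω with
  | nil => exact cs.wordProd_nil ▸ one_mem _
  | cons i ω₁ ih =>
    rw [cs.wordProd_cons]
    exact mul_mem (Subgroup.subset_closure ⟨i, hω i (by simp), rfl⟩)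
      (ih fun i hi => hω i (by simp [hi]))

theorem exists_word_J {v : W} (hv : v ∈ Subgroup.closure (cs.simple '' J)) :
    ∃ ω : List B, (∀ i ∈ ω, i ∈ J) ∧ π ω = v := by
  induction hv using Subgroup.closure_induction with
  | mem x hx =>
    obtain ⟨i, hi, rfl⟩ := hx
    exact ⟨[i], by simpa using hi, by simp⟩
  | one => exact ⟨[], by simp, by simp⟩
  | mul x y _ _ ihx ihy =>
    obtain ⟨ω₁, h1, rfl⟩ := ihx
    obtain ⟨ω₂, h2, rfl⟩ := ihy
    refine ⟨ω₁ ++ ω₂, fun i hi => ?_, by rw [cs.wordProd_append]⟩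
    rcases List.mem_append.mp hi with h | h
    exacts [h1 i h, h2 i h]
  | inv x _ ihx =>
    obtain ⟨ω₁, h1, rfl⟩ := ihx
    exact ⟨ω₁.reverse, fun i hi => h1 i (by simpa using hi), by rw [cs.wordProd_reverse]⟩

theorem reduce_word (n : ℕ) : ∀ ω : List B, ω.length ≤ n →
    ∃ ω', ω' <+ ω ∧ π ω' = π ω ∧ cs.IsReduced ω' := by
  induction n with
  | zero =>
    intro ω hω
    have : ω = [] := List.eq_nil_of_length_eq_zero (by omega)
    subst this
    exact ⟨[], List.Sublist.refl _, rfl, by simp [CoxeterSystem.IsReduced]⟩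
  | succ n ih =>
    intro ω hω
    by_cases hred : cs.IsReduced ω
    · exact ⟨ω, List.Sublist.refl _, rfl, hred⟩
    · obtain ⟨ω₁, hsub, hlen, hprod⟩ := deletion cs hred
      obtain ⟨ω', hsub', hprod', hred'⟩ := ih ω₁ (by omega)
      exact ⟨ω', hsub'.trans hsub, by rw [hprod', hprod], hred'⟩

theorem exists_reduced_word_J {v : W} (hv : v ∈ Subgroup.closure (cs.simple '' J)) :
    ∃ ω : List B, cs.IsReduced ω ∧ (∀ i ∈ ω, i ∈ J) ∧ π ω = v := by
  obtain ⟨ω, hJ, rfl⟩ := exists_word_J cs J hv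
  obtain ⟨ω', hsub, hprod, hred⟩ := reduce_word cs ω.length ω le_rfl
  exact ⟨ω', hred, fun i hi => hJ i (hsub.subset hi), hprod⟩

theorem ris_mem_WJ {ω : List B} (hω : ∀ i ∈ ω, i ∈ J) :
    ∀ t ∈ cs.rightInvSeq ω, t ∈ Subgroup.closure (cs.simple '' J) := by
  induction ω with
  | nil => simp [CoxeterSystem.rightInvSeq]
  | cons i ω₁ ih =>
    intro t ht
    have hris : cs.rightInvSeq (i :: ω₁) = ((π ω₁)⁻¹ * s i * π ω₁) :: cs.rightInvSeq ω₁ := rfl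
    rw [hris, List.mem_cons] at ht
    have hmem : π ω₁ ∈ Subgroup.closure (cs.simple '' J) :=
      wordProd_mem_WJ cs J (fun i hi => hω i (by simp [hi]))
    rcases ht with rfl | ht
    · exact mul_mem (mul_mem (inv_mem hmem)
        (Subgroup.subset_closure ⟨i, hω i (by simp), rfl⟩)) hmem
    · exact ih (fun i hi => hω i (by simp [hi])) t ht

/-- If `v ∈ W_J` and `t` is a right inversion of `v`, then `t ∈ W_J`. -/
theorem mem_WJ_of_N {v t : W} (hv : v ∈ Subgroup.closure (cs.simple '' J))
    (h : N cs v t = true) : t ∈ Subgroup.closure (cs.simple '' J) := by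
  obtain ⟨ω, hred, hJ, rfl⟩ := exists_reduced_word_J cs J hv
  exact ris_mem_WJ cs J hJ t (mem_ris_of_N cs ω t h)

theorem exists_min (u : W) : ∃ m, (∃ x ∈ Subgroup.closure (cs.simple '' J), m = u * x) ∧
    ∀ y ∈ Subgroup.closure (cs.simple '' J), ℓ m ≤ ℓ (m * y) := by
  classical
  set WJ := Subgroup.closure (cs.simple '' J)
  set Sset : Set ℕ := (fun x : WJ => ℓ (u * x)) '' Set.univ with hS
  have hne : Sset.Nonempty := ⟨ℓ (u * (1 : WJ)), ⟨1, Set.mem_univ _, rfl⟩⟩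
  obtain ⟨x₀, -, hx₀⟩ := Nat.sInf_mem hne
  have hx₀' : ℓ (u * ↑x₀) = sInf Sset := hx₀
  refine ⟨u * x₀, ⟨x₀, x₀.2, rfl⟩, fun y hy => ?_⟩
  have hmem : ℓ (u * ↑(x₀ * ⟨y, hy⟩)) ∈ Sset := ⟨x₀ * ⟨y, hy⟩, Set.mem_univ _, rfl⟩
  have h2 := Nat.sInf_le hmem
  rw [← hx₀'] at h2
  simpa [mul_assoc] using h2

/-- Length additivity for a minimal coset representative. -/
theorem min_add {m : W} (hmin : ∀ y ∈ Subgroup.closure (cs.simple '' J), ℓ m ≤ ℓ (m * y)) :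
    ∀ v ∈ Subgroup.closure (cs.simple '' J), ℓ (m * v) = ℓ m + ℓ v := by
  intro v hv
  rcases Nat.lt_or_ge (ℓ (m * v)) (ℓ m + ℓ v) with hlt | hge
  · exfalso
    obtain ⟨ωm, (hm_len : ℓ (π ωm) = ωm.length), rfl⟩ := cs.exists_reduced_word m
    obtain ⟨ωv, hv_red, hv_J, rfl⟩ := exists_reduced_word_J cs J hv
    have hprod : π (ωm ++ ωv) = π ωm * π ωv := cs.wordProd_append ωm ωv
    have hv_len : ℓ (π ωv) = ωv.length := hv_red
    have hnotred : ¬ cs.IsReduced (ωm ++ ωv) := by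
      intro hred
      have h : ℓ (π (ωm ++ ωv)) = (ωm ++ ωv).length := hred
      rw [hprod, List.length_append] at h
      omega
    obtain ⟨ω', hsub, hlen, hπ⟩ := deletion cs hnotred
    obtain ⟨a, b, rfl, ha, hb⟩ := List.sublist_append_iff.mp hsub
    rw [hprod] at hπ
    have hπab : π a * π b = π ωm * π ωv := by rw [← cs.wordProd_append]; exact hπ
    have hbJ : ∀ i ∈ b, i ∈ J := fun i hi => hv_J i (hb.subset hi)
    have hbW : π b ∈ Subgroup.closure (cs.simple '' J) := wordProd_mem_WJ cs J hbJ
    rw [List.length_append, List.length_append] at hlen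
    rcases eq_or_lt_of_le ha.length_le with haeq | halt
    · have haa : a = ωm := ha.eq_of_length haeq
      rw [haa] at hπab
      have hbv : π b = π ωv := mul_left_cancel hπab
      have h1 : ℓ (π ωv) ≤ b.length := by rw [← hbv]; exact cs.length_wordProd_le b
      have h3 : a.length = ωm.length := haeq
      have h2 : ℓ (π ωv) = ωv.length := hv_red
      omega
    · have hy : π ωv * (π b)⁻¹ ∈ Subgroup.closure (cs.simple '' J) :=
        mul_mem (wordProd_mem_WJ cs J hv_J) (inv_mem hbW)
      have : π ωm * (π ωv * (π b)⁻¹) = π a := by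
        rw [← mul_assoc, ← hπab]; group
      have h1 := hmin _ hy
      rw [this] at h1
      have h2 : ℓ (π a) ≤ a.length := cs.length_wordProd_le a
      omega
  · exact le_antisymm (cs.length_mul_le m v) hge

/-- The descent condition implies minimality in the coset. -/
theorem descent_min {u : W} (hdesc : ∀ i ∈ J, ℓ u < ℓ (u * s i)) :
    ∀ y ∈ Subgroup.closure (cs.simple '' J), ℓ u ≤ ℓ (u * y) := by
  obtain ⟨m, ⟨x₀, hx₀, rfl⟩, hmin⟩ := exists_min cs J u
  set z := x₀⁻¹ with hz
  have hzW : z ∈ Subgroup.closure (cs.simple '' J) := inv_mem hx₀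
  have hu : u = u * x₀ * z := by rw [hz]; group
  rcases eq_or_ne z 1 with h1 | h1
  · rw [h1, mul_one] at hu
    intro y hy
    have := hmin y hy
    rwa [← hu] at this
  · exfalso
    obtain ⟨θ, hθred, hθJ, hθprod⟩ := exists_reduced_word_J cs J hzW
    rcases List.eq_nil_or_concat θ with h | ⟨θ₁, i, rfl⟩
    · apply h1
      rw [← hθprod, h, cs.wordProd_nil]
    have hiJ : i ∈ J := hθJ i (by simp)
    have hθ₁J : ∀ k ∈ θ₁, k ∈ J := fun k hk => hθJ k (by simp [hk])
    have hθ₁red : cs.IsReduced θ₁ := by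
      have := hθred.take θ₁.length
      rwa [List.concat_eq_append, List.take_left] at this
    have hz_split : z = π θ₁ * s i := by rw [← hθprod, cs.wordProd_concat]
    have husi : u * s i = (u * x₀) * π θ₁ := by
      conv_lhs => rw [hu]
      rw [hz_split, mul_assoc, cs.simple_mul_simple_cancel_right]
    have hlen1 : ℓ (u * s i) = ℓ (u * x₀) + θ₁.length := by
      rw [husi, min_add cs J hmin _ (wordProd_mem_WJ cs J hθ₁J), hθ₁red]
    have hlen2 : ℓ u = ℓ (u * x₀) + θ₁.length + 1 := by
      have e1 : ℓ (u * x₀ * z) = ℓ (u * x₀) + ℓ z := min_add cs J hmin z hzW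
      have e2 : ℓ z = θ₁.length + 1 := by
        have : ℓ (π (θ₁.concat i)) = (θ₁.concat i).length := hθred
        rw [hθprod] at this
        simpa using this
      rw [← hu] at e1
      omega
    have := hdesc i hiJ
    omega

/-- A minimal representative has no inversions in `W_J`. -/
theorem N_false_of_descents {u t : W} (hdesc : ∀ i ∈ J, ℓ u < ℓ (u * s i))
    (ht : cs.IsReflection t) (htW : t ∈ Subgroup.closure (cs.simple '' J)) :
    N cs u t = false := by
  have h1 : ℓ u ≤ ℓ (u * t) := descent_min cs J hdesc t htW
  have h2 : ℓ (u * t) ≠ ℓ u := ht.length_mul_left_ne u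
  have : ¬ (ℓ (u * t) < ℓ u) := by omega
  rw [← N_iff cs ht u] at this
  simpa using this

end Stmt4Aux3
end

end Stmt4Aux

open Stmt4Aux Stmt4Aux2 Stmt4Aux3 in
/-- Let `W` be the (finite) Weyl group of a crystallographic root
system with simple reflections `s 0, …, s (n-1)`, `j` an index, `W_j` the maximal
parabolic subgroup omitting `s j`, `w₀` the longest element of `W`, `w₀ⱼ` the longest
element of `W_j`, `wʲ` the minimal-length coset representative of `w₀ W_j`, and `w''`
the minimal-length coset representative of `w₀ⱼ sⱼ W_j`.  Then `w' := wʲ (w'')⁻¹` is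
itself a minimal-length coset representative in `W/W_j`, i.e.
`ℓ(w' sᵢ) = ℓ(w') + 1` for every `i ≠ j`. -/
theorem stmt_4 {n : ℕ} (M : CoxeterMatrix (Fin n)) {W : Type*} [Group W]
    (cs : CoxeterSystem M W) [Finite W]
    -- crystallographic: all Coxeter matrix entries lie in {1,2,3,4,6}
    (hcrys : ∀ i j : Fin n, M i j ∈ ({1, 2, 3, 4, 6} : Set ℕ))
    (j : Fin n)
    (Wj : Subgroup W) (hWj : Wj = Subgroup.closure (cs.simple '' {i : Fin n | i ≠ j}))
    (w₀ w₀j wj w'' : W)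
    -- `w₀` is the longest element of `W`
    (hw₀ : ∀ u : W, cs.length u ≤ cs.length w₀)
    -- `w₀j` is the longest element of `W_j`
    (hw₀j_mem : w₀j ∈ Wj) (hw₀j : ∀ u ∈ Wj, cs.length u ≤ cs.length w₀j)
    -- `wj` is the minimal coset representative of `w₀ W_j`
    (hwj_coset : wj⁻¹ * w₀ ∈ Wj)
    (hwj_min : ∀ i : Fin n, i ≠ j → cs.length wj < cs.length (wj * cs.simple i))
    -- `w''` is the minimal coset representative of `w₀j sⱼ W_j`
    (hw''_coset : w''⁻¹ * (w₀j * cs.simple j) ∈ Wj)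
    (hw''_min : ∀ i : Fin n, i ≠ j → cs.length w'' < cs.length (w'' * cs.simple i)) :
    ∀ i : Fin n, i ≠ j →
      cs.length (wj * w''⁻¹ * cs.simple i) = cs.length (wj * w''⁻¹) + 1 := by
  classical
  subst hWj
  intro i hi
  set J : Set (Fin n) := {k : Fin n | k ≠ j} with hJdef
  have hiJ : i ∈ J := hi
  -- degenerate case: two simple reflections coincide
  by_cases hdeg : ∃ k : Fin n, k ≠ j ∧ cs.simple k = cs.simple j
  · obtain ⟨k, hk, hsk⟩ := hdeg
    have key : ∀ u : W, (∀ i : Fin n, i ≠ j → cs.length u < cs.length (u * cs.simple i)) →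
        u = 1 := by
      intro u hu
      by_contra h
      obtain ⟨i₀, hi₀⟩ := cs.exists_rightDescent_of_ne_one h
      have hi₀' : cs.length (u * cs.simple i₀) < cs.length u := hi₀
      rcases eq_or_ne i₀ j with rfl | hne
      · have := hu k hk
        rw [hsk] at this
        omega
      · have := hu i₀ hne
        omega
    rw [key wj hwj_min, key w'' hw''_min]
    simp [cs.length_simple]
  -- main case
  push_neg at hdeg
  have hsj_not : cs.simple j ∉ Subgroup.closure (cs.simple '' J) := by
    intro hmem
    obtain ⟨ω, hred, hJw, hprod⟩ := exists_reduced_word_J cs J hmem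
    have hredl : cs.length (cs.wordProd ω) = ω.length := hred
    have hlen : ω.length = 1 := by rw [← hredl, hprod, cs.length_simple]
    obtain ⟨k, rfl⟩ : ∃ k, ω = [k] := List.length_eq_one_iff.mp hlen
    have hkj : cs.simple k = cs.simple j := by simpa using hprod
    exact hdeg k (hJw k (by simp)) hkj
  have hdesc_wj : ∀ i ∈ J, cs.length wj < cs.length (wj * cs.simple i) :=
    fun i hi => hwj_min i hi
  have hdesc_w'' : ∀ i ∈ J, cs.length w'' < cs.length (w'' * cs.simple i) :=
    fun i hi => hw''_min i hi
  set q : W := w''⁻¹ * (w₀j * cs.simple j) with hq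
  have hqW : q ∈ Subgroup.closure (cs.simple '' J) := hw''_coset
  set c : W := cs.simple j * w₀j⁻¹ with hc_def
  have hw''inv : w''⁻¹ = q * c := by
    rw [hq, hc_def]
    have : w''⁻¹ * (w₀j * cs.simple j) * (cs.simple j * w₀j⁻¹)
        = w''⁻¹ * (w₀j * (cs.simple j * cs.simple j) * w₀j⁻¹) := by group
    rw [this, cs.simple_mul_simple_self j]
    group
  set r₂ : W := w₀j⁻¹ * cs.simple i * (w₀j⁻¹)⁻¹ with hr₂
  set r₃ : W := c * cs.simple i * c⁻¹ with hr₃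
  set t : W := w''⁻¹ * cs.simple i * w'' with ht_def
  have ht : cs.IsReflection t := by
    have := (cs.isReflection_simple i).conj w''⁻¹
    rwa [inv_inv] at this
  have hr₂W : r₂ ∈ Subgroup.closure (cs.simple '' J) := by
    rw [hr₂]
    exact mul_mem (mul_mem (inv_mem hw₀j_mem)
      (Subgroup.subset_closure ⟨i, hiJ, rfl⟩)) (inv_mem (inv_mem hw₀j_mem))
  have ht_eq : t = q * r₃ * q⁻¹ := by
    rw [ht_def, hr₃, show w'' = (w''⁻¹)⁻¹ by rw [inv_inv], hw''inv]
    group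
  -- evaluation of N c (s i)
  have hNw₀j : N cs w₀j⁻¹ (cs.simple i) = true := by
    rw [N_iff cs (cs.isReflection_simple i)]
    have h1 : cs.length (w₀j⁻¹ * cs.simple i) = cs.length (cs.simple i * w₀j) := by
      rw [← cs.length_inv]
      congr 1
      rw [mul_inv_rev, inv_inv, cs.inv_simple]
    have h2 : cs.simple i * w₀j ∈ Subgroup.closure (cs.simple '' J) :=
      mul_mem (Subgroup.subset_closure ⟨i, hiJ, rfl⟩) hw₀j_mem
    have h3 := hw₀j _ h2
    have h4 : cs.length (cs.simple i * w₀j) ≠ cs.length w₀j := cs.length_simple_mul_ne w₀j i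
    have h5 : cs.length w₀j⁻¹ = cs.length w₀j := cs.length_inv w₀j
    omega
  have hNsj : N cs (cs.simple j) r₂ = false := by
    rw [N_simple]
    simp only [decide_eq_false_iff_not]
    intro h
    rw [← h] at hsj_not
    exact hsj_not hr₂W
  have hNc : N cs c (cs.simple i) = true := by
    rw [hc_def, N_mul, hNw₀j, ← hr₂, hNsj]
    simp
  have hdecomp : N cs w''⁻¹ (cs.simple i) = xor true (N cs q r₃) := by
    rw [hw''inv, N_mul, hNc, ← hr₃]
  have hmain : N cs (wj * w''⁻¹) (cs.simple i)
      = xor (N cs w''⁻¹ (cs.simple i)) (N cs wj t) := by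
    rw [N_mul, ht_def, inv_inv]
  -- the final computation
  have hNfinal : N cs (wj * w''⁻¹) (cs.simple i) = false := by
    cases hcase : N cs q r₃ with
    | true =>
      -- Case A : t ∈ W_J
      have hr₃W : r₃ ∈ Subgroup.closure (cs.simple '' J) := mem_WJ_of_N cs J hqW hcase
      have htW : t ∈ Subgroup.closure (cs.simple '' J) := by
        rw [ht_eq]
        exact mul_mem (mul_mem hqW hr₃W) (inv_mem hqW)
      have h1 : N cs wj t = false := N_false_of_descents cs J hdesc_wj ht htW
      rw [hmain, hdecomp, hcase, h1]
      simp
    | false =>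
      -- Case B : t ∉ W_J
      have htW : t ∉ Subgroup.closure (cs.simple '' J) := by
        intro htW
        have h1 : N cs w''⁻¹ (cs.simple i) = N cs w'' t := by
          rw [N_inv, ht_def]
        have h2 : N cs w'' t = false := N_false_of_descents cs J hdesc_w'' ht htW
        rw [h1, h2, hcase] at hdecomp
        simp at hdecomp
      set v : W := wj⁻¹ * w₀ with hv_def
      have hvW : v ∈ Subgroup.closure (cs.simple '' J) := hwj_coset
      have hwj_eq : wj = w₀ * v⁻¹ := by rw [hv_def]; group
      have hNv : N cs v⁻¹ t = false := by
        cases hNv : N cs v⁻¹ t with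
        | false => rfl
        | true => exact absurd (mem_WJ_of_N cs J (inv_mem hvW) hNv) htW
      have hNw₀ : N cs w₀ (v⁻¹ * t * (v⁻¹)⁻¹) = true := by
        rw [N_iff cs (ht.conj v⁻¹)]
        have h1 := hw₀ (w₀ * (v⁻¹ * t * (v⁻¹)⁻¹))
        have h2 : cs.length (w₀ * (v⁻¹ * t * (v⁻¹)⁻¹)) ≠ cs.length w₀ :=
          (ht.conj v⁻¹).length_mul_left_ne w₀
        omega
      have hNwj : N cs wj t = true := by
        rw [hwj_eq, N_mul, hNv, hNw₀]
        simp
      rw [hmain, hdecomp, hcase, hNwj]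
      simp
  -- convert to length statement
  have hnotlt : ¬ cs.length (wj * w''⁻¹ * cs.simple i) < cs.length (wj * w''⁻¹) := by
    rw [← N_iff cs (cs.isReflection_simple i)]
    simp [hNfinal]
  rcases cs.length_mul_simple (wj * w''⁻¹) i with h | h
  · exact h
  · omega
end

section
/- Let $W$ be a Weyl group, $k$ a minuscule index, and define a sequence of indices $i_0 = k$, $i_{-1} = \is$ for some fixed $\is \neq k$, and $i_j = \sigma_{i_{j-1}}(i_{j-2})$ where $\sigma_j$ is the Dynkin involution of the diagram with node $j$ deleted. For $j \geq 1$ let $u_{i_j} \in W_{i_j}$ be the shortest element with $u_{i_j}(\omega_{i_{j-1}}^\vee) = w_{0,i_j}(\omega_{i_{j-1}}^\vee)$. Then for every $j \in \{1, \dots, c_\is\}$ (where $c_\is = \langle \omega_\is^\vee, \theta\rangle$), the product $u_{i_j}u_{i_{j-1}}\cdots u_{i_1}$ is a minimal-length coset representative in $W/W_k$ and satisfies $u_{i_j}\cdots u_{i_1}(\omega_k^\vee) = -\omega_{i_{j+1}}^\vee + \omega_{i_j}^\vee$. -/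
open scoped BigOperators

/-- `prodU u j = u j * u (j-1) * ⋯ * u 1`. -/
def prodU {W : Type*} [Group W] (u : ℕ → W) : ℕ → W
  | 0 => 1
  | (j + 1) => u (j + 1) * prodU u (j : ℕ)

/-!
Strong exchange comes from Tits' sign cocycle: `s i` acts on `W × ℤˣ` by conjugating the first
factor and changing the sign exactly at `s i`. These actions satisfy the Coxeter relations, and
the sign that `w = π ω` attaches to a reflection `t` is `-1` only if `t` occurs in the right
inversion sequence of `ω`. Strong exchange yields reduced words inside standard parabolic
subgroups and Deodhar's lemma: if `y` has no left descent in `J`, lengths add on `W_J * y`.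

Write `P j = u j ⋯ u 1`; the formula for `P j ω_k` telescopes from the assumed identities. By
induction on `j`, `P j` has no left descent other than `i_{j+1}`, so lengths add along the
product. A left descent `a ∉ {i_j, i_{j+1}}` of `P j` would be one of `u j`, and `s a * u j`
would be a shorter element of `W_{i_j}` acting like `u j` on `ω_{i_{j-1}}`. The left inversion
`s_{i_j}` of `P j` would be conjugate, by `u j ⋯ u (q+2)`, to a left inversion of some `u (q+1)`,
hence to an element of `W_{i_{q+1}}` fixing `ω_{i_{q+1}}`; but `u j ⋯ u (q+2)` sends
`ω_{i_{q+1}}` to `(n+1) ω_{i_j} - n ω_{i_{j+1}}`, which `s_{i_j}` moves. Finally, a right descent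
`i ≠ k` of `P (m+1)` forces `s_{i_m} * P m = P m * s i`, which is impossible because the
`α_{i_m}`-coordinate of `P m ω_k` is `1`.
-/

theorem mul_mul_inv_eq_iff {G : Type*} [Group G] (g t c : G) :
    g * t * g⁻¹ = c ↔ t = g⁻¹ * c * g := by
  constructor
  · intro h; rw [← h]; group
  · intro h; rw [h]; group

namespace CoxeterSystem

variable {B W : Type*} [Group W] {M : CoxeterMatrix B} (cs : CoxeterSystem M W)

local prefix:100 "s " => cs.simple
local prefix:100 "π " => cs.wordProd
local prefix:100 "ℓ " => cs.length

open Classical in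
noncomputable def signFun (i : B) (p : W × ℤˣ) : W × ℤˣ :=
  (s i * p.1 * s i, if p.1 = s i then -p.2 else p.2)

theorem signFun_involutive (i : B) : Function.Involutive (cs.signFun i) := by
  classical
  rintro ⟨w, ε⟩
  have hconj : s i * (s i * w * s i) * s i = w := by
    simp [mul_assoc, cs.simple_mul_simple_cancel_left]
  have hfix : s i * w * s i = s i ↔ w = s i := by
    constructor
    · intro h; rw [← hconj, h, cs.simple_mul_simple_self, one_mul]
    · rintro rfl; rw [cs.simple_mul_simple_self, one_mul]
  by_cases h : w = s i <;> simp [signFun, h, hconj, hfix]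

noncomputable def signPerm (i : B) : Equiv.Perm (W × ℤˣ) := (cs.signFun_involutive i).toPerm

open Classical in
theorem signPerm_apply (i : B) (p : W × ℤˣ) :
    cs.signPerm i p = (s i * p.1 * s i, if p.1 = s i then -p.2 else p.2) := rfl

theorem simple_mul_pow_eq_inv_pow_mul_simple (i j : B) (a : ℕ) :
    s j * (s i * s j) ^ a = (s i * s j)⁻¹ ^ a * s j := by
  induction a with
  | zero => simp
  | succ a ih =>
    rw [pow_succ, ← mul_assoc, ih, pow_succ, mul_inv_rev, cs.inv_simple, cs.inv_simple]
    simp only [mul_assoc]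

open Classical in
theorem signPerm_mul_pow_apply (i j : B) (a : ℕ) (t : W) (ε : ℤˣ) :
    ((cs.signPerm i * cs.signPerm j) ^ a) (t, ε) =
      ((s i * s j) ^ a * t * ((s i * s j) ^ a)⁻¹,
        ε * ∏ c ∈ Finset.range (2 * a),
          if t = (s i * s j)⁻¹ ^ c * s j then -1 else 1) := by
  have hswap := cs.simple_mul_pow_eq_inv_pow_mul_simple i j
  set p := s i * s j with hp
  have hsj : s j * s i * s j = p⁻¹ * s j := by
    rw [hp, mul_inv_rev, cs.inv_simple, cs.inv_simple]
  have hconj_sj : ∀ a : ℕ, (p ^ a)⁻¹ * s j * p ^ a = p⁻¹ ^ (2 * a) * s j := by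
    intro a
    rw [mul_assoc, hswap, ← inv_pow, ← mul_assoc, ← pow_add, two_mul]
  have hconj_sjsisj : ∀ a : ℕ,
      (p ^ a)⁻¹ * (s j * s i * s j) * p ^ a = p⁻¹ ^ (2 * a + 1) * s j := by
    intro a
    rw [hsj, mul_assoc, mul_assoc, hswap, ← inv_pow, ← mul_assoc, ← mul_assoc, ← pow_succ,
      ← pow_add]
    congr 2
    omega
  induction a with
  | zero => simp
  | succ a ih =>
    rw [pow_succ', Equiv.Perm.mul_apply, ih, Equiv.Perm.mul_apply, signPerm_apply, signPerm_apply]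
    have hj : p ^ a * t * (p ^ a)⁻¹ = s j ↔ t = p⁻¹ ^ (2 * a) * s j := by
      rw [mul_mul_inv_eq_iff, hconj_sj]
    have hi : s j * (p ^ a * t * (p ^ a)⁻¹) * s j = s i ↔ t = p⁻¹ ^ (2 * a + 1) * s j := by
      have hsj_inv : s j * (p ^ a * t * (p ^ a)⁻¹) * s j =
          s j * (p ^ a * t * (p ^ a)⁻¹) * (s j)⁻¹ := by
        rw [cs.inv_simple]
      rw [hsj_inv, mul_mul_inv_eq_iff, cs.inv_simple, mul_mul_inv_eq_iff, hconj_sjsisj]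
    simp only [hj, hi, Prod.mk.injEq]
    refine ⟨by rw [pow_succ', mul_inv_rev, hp, mul_inv_rev, cs.inv_simple, cs.inv_simple]; group,
      ?_⟩
    rw [show 2 * (a + 1) = 2 * a + 1 + 1 by ring, Finset.prod_range_succ, Finset.prod_range_succ]
    by_cases h1 : t = p⁻¹ ^ (2 * a) * s j <;> by_cases h2 : t = p⁻¹ ^ (2 * a + 1) * s j <;>
      simp [h1, h2]

theorem isLiftable_signPerm : M.IsLiftable cs.signPerm := by
  classical
  -- `(s i * s j)⁻¹ ^ c * s j` has period `M i j` in `c`, so every sign change occurs twice.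
  intro i j
  ext1 ⟨t, ε⟩
  have hp : (s i * s j) ^ M i j = 1 := cs.simple_mul_simple_pow i j
  have hperiodic : ∀ c, (if t = (s i * s j)⁻¹ ^ (M i j + c) * s j then (-1 : ℤˣ) else 1) =
      if t = (s i * s j)⁻¹ ^ c * s j then -1 else 1 := by
    intro c; rw [pow_add, inv_pow, hp, inv_one, one_mul]
  rw [signPerm_mul_pow_apply, hp, two_mul, Finset.prod_range_add]
  rw [Finset.prod_congr rfl fun c _ => hperiodic c, ← sq, Int.units_sq, mul_one, one_mul, inv_one,
    mul_one]
  rfl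

noncomputable def signHom : W →* Equiv.Perm (W × ℤˣ) :=
  cs.lift ⟨cs.signPerm, cs.isLiftable_signPerm⟩

noncomputable def reflSign (w t : W) : ℤˣ := (cs.signHom w (t, 1)).2

theorem signHom_simple (i : B) : cs.signHom (s i) = cs.signPerm i :=
  cs.lift_apply_simple _ i

open Classical in
theorem reflSign_simple (i : B) (t : W) : cs.reflSign (s i) t = if t = s i then -1 else 1 := by
  simp [reflSign, signHom_simple, signPerm_apply]

theorem signHom_apply (w t : W) (ε : ℤˣ) :
    cs.signHom w (t, ε) = (w * t * w⁻¹, ε * cs.reflSign w t) := by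
  classical
  induction w using cs.simple_induction_left generalizing ε with
  | one => simp [reflSign]
  | mul_simple_left w i ih =>
    rw [reflSign, map_mul, Equiv.Perm.mul_apply, Equiv.Perm.mul_apply, ih, ih, signHom_simple,
      signPerm_apply, signPerm_apply]
    simp only [mul_inv_rev, cs.inv_simple, one_mul, Prod.mk.injEq]
    refine ⟨by group, ?_⟩
    split_ifs <;> simp

theorem reflSign_mul (x y t : W) :
    cs.reflSign (x * y) t = cs.reflSign y t * cs.reflSign x (y * t * y⁻¹) := by
  rw [reflSign, map_mul, Equiv.Perm.mul_apply, signHom_apply, signHom_apply, one_mul]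

theorem reflSign_one (t : W) : cs.reflSign 1 t = 1 := by
  simp [reflSign]

theorem reflSign_wordProd_of_not_mem {ω : List B} {t : W} (ht : t ∉ cs.rightInvSeq ω) :
    cs.reflSign (π ω) t = 1 := by
  induction ω with
  | nil => exact cs.reflSign_one t
  | cons i ω ih =>
    simp only [rightInvSeq, List.mem_cons, not_or] at ht
    rw [cs.wordProd_cons, reflSign_mul, ih ht.2, reflSign_simple, if_neg, one_mul]
    intro h
    apply ht.1
    rw [← h]
    group

theorem reflSign_self {t : W} (ht : cs.IsReflection t) : cs.reflSign t t = -1 := by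
  obtain ⟨v, a, rfl⟩ := ht
  have hcancel : cs.reflSign v⁻¹ (v * s a * v⁻¹) * cs.reflSign v (s a) = 1 := by
    rw [← reflSign_one cs (v * s a * v⁻¹), ← mul_inv_cancel v, reflSign_mul]
    group
  have hconj : v⁻¹ * (v * s a * v⁻¹) * v⁻¹⁻¹ = s a := by group
  have hfix : s a * s a * (s a)⁻¹ = s a := by group
  rw [reflSign_mul, hconj, reflSign_mul, hfix, reflSign_simple, if_pos rfl, neg_one_mul, mul_neg,
    hcancel]

theorem reflSign_mul_self {t : W} (ht : cs.IsReflection t) (w : W) :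
    cs.reflSign (w * t) t = -cs.reflSign w t := by
  rw [reflSign_mul, reflSign_self cs ht, mul_inv_cancel_right, neg_one_mul]

theorem isRightInversion_of_reflSign_eq_neg_one {w t : W}
    (h : cs.reflSign w t = -1) : cs.IsRightInversion w t := by
  obtain ⟨ω, hω, rfl⟩ := cs.exists_isReduced w
  by_cases hmem : t ∈ cs.rightInvSeq ω
  · exact cs.isRightInversion_of_mem_rightInvSeq hω hmem
  · rw [reflSign_wordProd_of_not_mem cs hmem] at h
    exact absurd h (by decide)

theorem mem_rightInvSeq_of_isRightInversion {ω : List B} {t : W}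
    (ht : cs.IsRightInversion (π ω) t) : t ∈ cs.rightInvSeq ω := by
  by_contra hmem
  have h : cs.reflSign (π ω * t) t = -1 := by
    rw [reflSign_mul_self cs ht.1, reflSign_wordProd_of_not_mem cs hmem]
  exact ht.1.isRightInversion_mul_left_iff.mp (isRightInversion_of_reflSign_eq_neg_one cs h)
    ht

theorem mem_leftInvSeq_of_isLeftInversion {ω : List B} {t : W}
    (ht : cs.IsLeftInversion (π ω) t) : t ∈ cs.leftInvSeq ω := by
  rw [← isRightInversion_inv_iff, ← wordProd_reverse] at ht
  simpa [rightInvSeq_reverse] using cs.mem_rightInvSeq_of_isRightInversion ht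

theorem exists_reduced_sublist (ω : List B) :
    ∃ α : List B, α.Sublist ω ∧ cs.IsReduced α ∧ π α = π ω := by
  induction ω with
  | nil => exact ⟨[], List.Sublist.refl _, by simp [IsReduced], rfl⟩
  | cons i ω ih =>
    obtain ⟨α, hsub, hred, hprod⟩ := ih
    rcases cs.length_simple_mul (π α) i with hup | hdown
    · refine ⟨i :: α, hsub.cons_cons i, ?_, by rw [wordProd_cons, wordProd_cons, hprod]⟩
      rw [IsReduced, wordProd_cons, hup, hred, List.length_cons]
    · have hinv : cs.IsLeftInversion (π α) (s i) := ⟨cs.isReflection_simple i, by omega⟩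
      obtain ⟨j, hj, hget⟩ := List.mem_iff_getElem.mp (cs.mem_leftInvSeq_of_isLeftInversion hinv)
      rw [length_leftInvSeq] at hj
      have herase : s i * π α = π (α.eraseIdx j) := by
        rw [← getD_leftInvSeq_mul_wordProd, List.getD_eq_getElem _ _ (by simpa using hj), hget]
      refine ⟨α.eraseIdx j, (List.eraseIdx_sublist α j).trans (hsub.cons i), ?_, ?_⟩
      · have := List.length_eraseIdx_add_one hj
        rw [IsReduced, ← herase]
        have := cs.length_wordProd_le (α.eraseIdx j)
        rw [IsReduced] at hred
        omega
      · rw [← herase, wordProd_cons, hprod]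

theorem leftInvSeq_append (α β : List B) :
    cs.leftInvSeq (α ++ β) =
      cs.leftInvSeq α ++ (cs.leftInvSeq β).map (fun r => π α * r * (π α)⁻¹) := by
  induction α with
  | nil => simp
  | cons a α ih =>
    simp only [List.cons_append, leftInvSeq, ih, List.map_append, List.map_map]
    congr 3
    funext r
    simp only [Function.comp_apply, MulAut.conj_apply, wordProd_cons, mul_inv_rev, cs.inv_simple]
    group

theorem isLeftInversion_or_of_isLeftInversion_mul {x y t : W} (hlen : ℓ (x * y) = ℓ x + ℓ y)
    (ht : cs.IsLeftInversion (x * y) t) :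
    cs.IsLeftInversion x t ∨ cs.IsLeftInversion y (x⁻¹ * t * x) := by
  obtain ⟨α, hα, rfl⟩ := cs.exists_isReduced x
  obtain ⟨β, hβ, rfl⟩ := cs.exists_isReduced y
  have hαβ : cs.IsReduced (α ++ β) := by
    rw [IsReduced, wordProd_append, hlen, hα, hβ, List.length_append]
  rw [← wordProd_append] at ht
  have hmem := cs.mem_leftInvSeq_of_isLeftInversion ht
  rw [leftInvSeq_append, List.mem_append, List.mem_map] at hmem
  rcases hmem with hmem | ⟨r, hr, rfl⟩
  · exact Or.inl (cs.isLeftInversion_of_mem_leftInvSeq hα hmem)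
  · right
    simpa [mul_assoc] using cs.isLeftInversion_of_mem_leftInvSeq hβ hr

theorem simple_mul_eq_mul_simple_of_isLeftDescent {x : W} {i a : B}
    (hup : ℓ (x * s i) = ℓ x + 1) (hda : cs.IsLeftDescent (x * s i) a)
    (hnd : ¬cs.IsLeftDescent x a) : s a * x = x * s i := by
  rcases cs.isLeftInversion_or_of_isLeftInversion_mul (by rw [hup, length_simple])
    ((cs.isLeftInversion_simple_iff_isLeftDescent _ _).mpr hda) with h | h
  · exact absurd ((cs.isLeftInversion_simple_iff_isLeftDescent _ _).mp h) hnd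
  · have h0 := h.2
    rw [length_simple, Nat.lt_one_iff, length_eq_zero_iff, mul_eq_one_iff_eq_inv,
      cs.inv_simple] at h0
    rw [← h0]
    group

def parabolic (J : Set B) : Subgroup W := Subgroup.closure (cs.simple '' J)

variable {J : Set B}

theorem simple_mem_parabolic {i : B} (hi : i ∈ J) : s i ∈ cs.parabolic J :=
  Subgroup.subset_closure ⟨i, hi, rfl⟩

theorem wordProd_mem_parabolic {ω : List B} (hω : ∀ i ∈ ω, i ∈ J) : π ω ∈ cs.parabolic J := by
  induction ω with
  | nil => simp [(cs.parabolic J).one_mem]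
  | cons i ω ih =>
    rw [wordProd_cons]
    exact mul_mem (cs.simple_mem_parabolic (hω i List.mem_cons_self))
      (ih fun j hj => hω j (List.mem_cons_of_mem i hj))

theorem exists_word_of_mem_parabolic {w : W} (hw : w ∈ cs.parabolic J) :
    ∃ ω : List B, (∀ i ∈ ω, i ∈ J) ∧ w = π ω := by
  induction hw using Subgroup.closure_induction with
  | mem x hx =>
    obtain ⟨i, hi, rfl⟩ := hx
    exact ⟨[i], by simpa using hi, by simp⟩
  | one => exact ⟨[], by simp, by simp⟩
  | mul x y _ _ hx hy =>
    obtain ⟨ωx, hωx, rfl⟩ := hx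
    obtain ⟨ωy, hωy, rfl⟩ := hy
    refine ⟨ωx ++ ωy, fun i hi => ?_, (cs.wordProd_append ωx ωy).symm⟩
    rcases List.mem_append.mp hi with h | h
    exacts [hωx i h, hωy i h]
  | inv x _ hx =>
    obtain ⟨ωx, hωx, rfl⟩ := hx
    exact ⟨ωx.reverse, fun i hi => hωx i (List.mem_reverse.mp hi), (cs.wordProd_reverse ωx).symm⟩

theorem exists_reduced_word_of_mem_parabolic {w : W} (hw : w ∈ cs.parabolic J) :
    ∃ ω : List B, cs.IsReduced ω ∧ (∀ i ∈ ω, i ∈ J) ∧ w = π ω := by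
  obtain ⟨ω, hωJ, rfl⟩ := cs.exists_word_of_mem_parabolic hw
  obtain ⟨α, hsub, hred, hprod⟩ := cs.exists_reduced_sublist ω
  exact ⟨α, hred, fun i hi => hωJ i (hsub.subset hi), hprod.symm⟩

theorem mem_parabolic_of_mem_leftInvSeq {ω : List B} (hω : ∀ i ∈ ω, i ∈ J) {t : W}
    (ht : t ∈ cs.leftInvSeq ω) : t ∈ cs.parabolic J := by
  induction ω generalizing t with
  | nil => simp at ht
  | cons i ω ih =>
    have hi := cs.simple_mem_parabolic (hω i List.mem_cons_self)
    rw [leftInvSeq, List.mem_cons, List.mem_map] at ht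
    rcases ht with rfl | ⟨r, hr, rfl⟩
    · exact hi
    · rw [MulAut.conj_apply]
      exact mul_mem (mul_mem hi (ih (fun j hj => hω j (List.mem_cons_of_mem i hj)) hr))
        (inv_mem hi)

theorem mem_parabolic_of_isLeftInversion {w t : W} (hw : w ∈ cs.parabolic J)
    (ht : cs.IsLeftInversion w t) : t ∈ cs.parabolic J := by
  obtain ⟨ω, -, hωJ, rfl⟩ := cs.exists_reduced_word_of_mem_parabolic hw
  exact cs.mem_parabolic_of_mem_leftInvSeq hωJ (cs.mem_leftInvSeq_of_isLeftInversion ht)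

theorem not_isLeftDescent_of_mem_parabolic {w : W} {i : B} (hi : s i ∉ cs.parabolic J)
    (hw : w ∈ cs.parabolic J) : ¬cs.IsLeftDescent w i := fun hd =>
  hi (cs.mem_parabolic_of_isLeftInversion hw
    ((cs.isLeftInversion_simple_iff_isLeftDescent w i).mpr hd))

theorem not_isRightDescent_of_mem_parabolic {w : W} {i : B} (hi : s i ∉ cs.parabolic J)
    (hw : w ∈ cs.parabolic J) : ¬cs.IsRightDescent w i := by
  rw [← isLeftDescent_inv_iff]
  exact cs.not_isLeftDescent_of_mem_parabolic hi (inv_mem hw)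

theorem exists_isLeftDescent_mem_of_mem_parabolic {w : W} (hw : w ∈ cs.parabolic J)
    (hne : w ≠ 1) : ∃ i ∈ J, cs.IsLeftDescent w i := by
  obtain ⟨ω, hred, hωJ, rfl⟩ := cs.exists_reduced_word_of_mem_parabolic hw
  cases ω with
  | nil => exact absurd (cs.wordProd_nil) hne
  | cons i ω =>
    refine ⟨i, hωJ i List.mem_cons_self, ?_⟩
    have := cs.length_wordProd_le ω
    rw [IsLeftDescent, wordProd_cons, cs.simple_mul_simple_cancel_left, ← wordProd_cons, hred,
      List.length_cons]
    omega

theorem length_mul_eq_add_of_le_length_mul {m : W}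
    (hm : ∀ r ∈ cs.parabolic J, ℓ m ≤ ℓ (r * m)) {x : W} (hx : x ∈ cs.parabolic J) :
    ℓ (x * m) = ℓ x + ℓ m := by
  obtain ⟨ω, hred, hωJ, rfl⟩ := cs.exists_reduced_word_of_mem_parabolic hx
  rw [hred]
  clear hx
  induction ω with
  | nil => simp
  | cons i ω ih =>
    have hωJ' : ∀ j ∈ ω, j ∈ J := fun j hj => hωJ j (List.mem_cons_of_mem i hj)
    have hred' : cs.IsReduced ω := by simpa using hred.drop 1
    have hi := cs.simple_mem_parabolic (hωJ i List.mem_cons_self)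
    have hih := ih hred' hωJ'
    have hnd : ¬cs.IsLeftInversion (π ω * m) (s i) := by
      intro hinv
      rcases cs.isLeftInversion_or_of_isLeftInversion_mul (by rw [hih, hred']) hinv
        with h | h
      · have := h.2
        rw [← wordProd_cons, hred, hred', List.length_cons] at this
        omega
      · have := hm _ (mul_mem (mul_mem (inv_mem (cs.wordProd_mem_parabolic hωJ')) hi)
          (cs.wordProd_mem_parabolic hωJ'))
        have := h.2
        omega
    rw [isLeftInversion_simple_iff_isLeftDescent, IsLeftDescent] at hnd
    rw [wordProd_cons, mul_assoc, List.length_cons]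
    rcases cs.length_simple_mul (π ω * m) i with h | h <;> omega

theorem length_mul_eq_add_of_forall_not_isLeftDescent {y : W}
    (hy : ∀ i ∈ J, ¬cs.IsLeftDescent y i) {x : W} (hx : x ∈ cs.parabolic J) :
    ℓ (x * y) = ℓ x + ℓ y := by
  classical
  -- Take `z * y` shortest in `W_J * y`; a descent of `z⁻¹` in `J` would be a left descent of `y`.
  have hex : ∃ n, ∃ z ∈ cs.parabolic J, ℓ (z * y) = n := ⟨_, 1, one_mem _, rfl⟩
  obtain ⟨z, hz, hzlen⟩ := Nat.find_spec hex
  have hmin : ∀ r ∈ cs.parabolic J, ℓ (z * y) ≤ ℓ (r * (z * y)) := fun r hr => by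
    rw [hzlen, ← mul_assoc]
    exact Nat.find_min' hex ⟨r * z, mul_mem hr hz, rfl⟩
  have hadd : ∀ x ∈ cs.parabolic J, ℓ (x * (z * y)) = ℓ x + ℓ (z * y) := fun x hx =>
    cs.length_mul_eq_add_of_le_length_mul hmin hx
  obtain rfl : z = 1 := by
    by_contra hne
    obtain ⟨i, hiJ, hi⟩ := cs.exists_isLeftDescent_mem_of_mem_parabolic (inv_mem hz)
      (inv_ne_one.mpr hne)
    apply hy i hiJ
    have h1 := hadd _ (inv_mem hz)
    have h2 := hadd _ (mul_mem (cs.simple_mem_parabolic hiJ) (inv_mem hz))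
    rw [inv_mul_cancel_left] at h1
    rw [mul_assoc, inv_mul_cancel_left] at h2
    rw [IsLeftDescent] at hi ⊢
    omega
  simpa using hadd _ hx

theorem exists_isLeftInversion_of_isLeftInversion_prodU (u : ℕ → W) {N : ℕ}
    (hadd : ∀ q < N, ℓ (prodU u (q + 1)) = ℓ (u (q + 1)) + ℓ (prodU u q)) {t : W}
    (ht : cs.IsLeftInversion (prodU u N) t) :
    ∃ q < N, cs.IsLeftInversion (u (q + 1))
      ((prodU u N * (prodU u (q + 1))⁻¹)⁻¹ * t * (prodU u N * (prodU u (q + 1))⁻¹)) := by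
  induction N generalizing t with
  | zero => exact absurd ht.2 (by simp [prodU])
  | succ N ih =>
    rcases cs.isLeftInversion_or_of_isLeftInversion_mul (hadd N N.lt_succ_self) ht with h | h
    · exact ⟨N, N.lt_succ_self, by simpa using h⟩
    · obtain ⟨q, hq, hinv⟩ := ih (fun q hq => hadd q (by omega)) h
      have hg : prodU u (N + 1) * (prodU u (q + 1))⁻¹ =
          u (N + 1) * (prodU u N * (prodU u (q + 1))⁻¹) := by
        rw [prodU, mul_assoc]
      set g := prodU u N * (prodU u (q + 1))⁻¹
      have hconj : (u (N + 1) * g)⁻¹ * t * (u (N + 1) * g) =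
          g⁻¹ * ((u (N + 1))⁻¹ * t * u (N + 1)) * g := by group
      exact ⟨q, by omega, by rwa [hg, hconj]⟩

section Representation

/-! `rt i`, `cα i` and `ω i` play the roles of the simple roots, the simple coroots and the
fundamental coweights. -/

variable {K V : Type*} [Field K] [AddCommGroup V] [Module K V] (ρ : W →* (V ≃ₗ[K] V))
  {ω cα : B → V} {rt : B → Module.Dual K V}

theorem coroot_ne_zero (hρ : Function.Injective ρ)
    (hrefl : ∀ i v, ρ (s i) v = v - rt i v • cα i) (i : B) : cα i ≠ 0 := by
  intro h
  have : s i = 1 := hρ (LinearEquiv.ext fun v => by simp [hrefl, h])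
  simpa [this] using cs.length_simple i

theorem root_apply_eq_zero_of_simple_apply_eq (hrefl : ∀ i v, ρ (s i) v = v - rt i v • cα i)
    {b : B} (hcα : cα b ≠ 0) {v : V} (h : ρ (s b) v = v) : rt b v = 0 := by
  rw [hrefl, sub_eq_self, smul_eq_zero] at h
  exact h.resolve_right hcα

theorem root_apply_eq_zero_of_conj_apply_eq (hrefl : ∀ i v, ρ (s i) v = v - rt i v • cα i)
    {b : B} (hcα : cα b ≠ 0) {g : W} {v : V} (h : ρ (g⁻¹ * s b * g) v = v) :
    rt b (ρ g v) = 0 := by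
  refine root_apply_eq_zero_of_simple_apply_eq cs ρ hrefl hcα ?_
  conv_rhs => rw [← h]
  simp

theorem apply_eq_self_of_mem_parabolic {J : Set B} {v : V} (h : ∀ i ∈ J, ρ (s i) v = v) {w : W}
    (hw : w ∈ cs.parabolic J) : ρ w v = v := by
  induction hw using Subgroup.closure_induction with
  | mem x hx =>
    obtain ⟨i, hi, rfl⟩ := hx
    exact h i hi
  | one => simp
  | mul x y _ _ hx hy => simp [hx, hy]
  | inv x _ hx =>
    conv_lhs => rw [← hx]
    simp

variable [DecidableEq B]

theorem coweight_ne_zero (hpair : ∀ i j, rt j (ω i) = if i = j then 1 else 0) (c : B) :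
    ω c ≠ 0 := by
  intro h
  simpa [h] using hpair c c

theorem simple_apply_coweight_of_ne (hrefl : ∀ i v, ρ (s i) v = v - rt i v • cα i)
    (hpair : ∀ i j, rt j (ω i) = if i = j then 1 else 0) {i c : B} (h : i ≠ c) :
    ρ (s i) (ω c) = ω c := by
  rw [hrefl, hpair, if_neg h.symm, zero_smul, sub_zero]

theorem apply_coweight_of_mem_parabolic (hrefl : ∀ i v, ρ (s i) v = v - rt i v • cα i)
    (hpair : ∀ i j, rt j (ω i) = if i = j then 1 else 0) {c : B} {w : W}
    (hw : w ∈ cs.parabolic {i | i ≠ c}) : ρ w (ω c) = ω c :=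
  cs.apply_eq_self_of_mem_parabolic ρ (fun _ hi => simple_apply_coweight_of_ne cs ρ hrefl hpair hi)
    hw

theorem simple_not_mem_parabolic (hrefl : ∀ i v, ρ (s i) v = v - rt i v • cα i)
    (hpair : ∀ i j, rt j (ω i) = if i = j then 1 else 0) {c : B} (hcα : cα c ≠ 0) :
    s c ∉ cs.parabolic {i | i ≠ c} := fun h => by
  simpa [hpair] using root_apply_eq_zero_of_simple_apply_eq cs ρ hrefl hcα
    (apply_coweight_of_mem_parabolic cs ρ hrefl hpair h)

variable {iseq : ℕ → B} {u : ℕ → W} {c : ℕ}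

theorem prodU_apply_coweight (hrefl : ∀ i v, ρ (s i) v = v - rt i v • cα i)
    (hpair : ∀ i j, rt j (ω i) = if i = j then 1 else 0)
    (hmem : ∀ j, 1 ≤ j → u j ∈ cs.parabolic {i | i ≠ iseq j})
    (hu1 : ρ (u 1) (ω (iseq 0)) = -ω (iseq 2) + ω (iseq 1))
    (huj : ∀ j, 2 ≤ j → j ≤ c →
      ρ (u j) (ω (iseq (j - 1))) = -ω (iseq (j + 1)) + (2 : K) • ω (iseq j))
    {j : ℕ} (hj : 1 ≤ j) (hjc : j ≤ c) :
    ρ (prodU u j) (ω (iseq 0)) = -ω (iseq (j + 1)) + ω (iseq j) := by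
  induction j, hj using Nat.le_induction with
  | base => simpa [prodU] using hu1
  | succ j hj ih =>
    have hfix := apply_coweight_of_mem_parabolic cs ρ hrefl hpair (hmem (j + 1) (by omega))
    have hact := huj (j + 1) (by omega) hjc
    rw [Nat.add_sub_cancel] at hact
    rw [prodU, map_mul, LinearEquiv.mul_apply, ih (by omega), map_add, map_neg, hfix, hact]
    module

theorem iseq_succ_ne (hrefl : ∀ i v, ρ (s i) v = v - rt i v • cα i)
    (hpair : ∀ i j, rt j (ω i) = if i = j then 1 else 0)
    (hmem : ∀ j, 1 ≤ j → u j ∈ cs.parabolic {i | i ≠ iseq j})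
    (hu1 : ρ (u 1) (ω (iseq 0)) = -ω (iseq 2) + ω (iseq 1))
    (huj : ∀ j, 2 ≤ j → j ≤ c →
      ρ (u j) (ω (iseq (j - 1))) = -ω (iseq (j + 1)) + (2 : K) • ω (iseq j))
    {j : ℕ} (hj : 1 ≤ j) (hjc : j ≤ c) : iseq (j + 1) ≠ iseq j := by
  intro h
  have := prodU_apply_coweight cs ρ hrefl hpair hmem hu1 huj hj hjc
  rw [h, neg_add_cancel, LinearEquiv.map_eq_zero_iff] at this
  exact coweight_ne_zero hpair _ this

theorem root_apply_prodU_apply_coweight (hrefl : ∀ i v, ρ (s i) v = v - rt i v • cα i)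
    (hpair : ∀ i j, rt j (ω i) = if i = j then 1 else 0)
    (hmem : ∀ j, 1 ≤ j → u j ∈ cs.parabolic {i | i ≠ iseq j})
    (hu1 : ρ (u 1) (ω (iseq 0)) = -ω (iseq 2) + ω (iseq 1))
    (huj : ∀ j, 2 ≤ j → j ≤ c →
      ρ (u j) (ω (iseq (j - 1))) = -ω (iseq (j + 1)) + (2 : K) • ω (iseq j))
    {j : ℕ} (hjc : j ≤ c) : rt (iseq j) (ρ (prodU u j) (ω (iseq 0))) = 1 := by
  rcases Nat.eq_zero_or_pos j with rfl | hj
  · simp [prodU, hpair]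
  · rw [prodU_apply_coweight cs ρ hrefl hpair hmem hu1 huj hj hjc, map_add, map_neg, hpair, hpair,
      if_neg (iseq_succ_ne cs ρ hrefl hpair hmem hu1 huj hj hjc), if_pos rfl, neg_zero, zero_add]

theorem not_isRightDescent_factor (hrefl : ∀ i v, ρ (s i) v = v - rt i v • cα i)
    (hpair : ∀ i j, rt j (ω i) = if i = j then 1 else 0) (hcα : ∀ i, cα i ≠ 0)
    (hmem : ∀ j, 1 ≤ j → u j ∈ cs.parabolic {i | i ≠ iseq j})
    (hshort : ∀ j, 1 ≤ j → ∀ v ∈ cs.parabolic {i | i ≠ iseq j},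
      ρ v (ω (iseq (j - 1))) = ρ (u j) (ω (iseq (j - 1))) → ℓ (u j) ≤ ℓ v)
    {j : ℕ} (hj : 1 ≤ j) {a : B} (ha : a ≠ iseq (j - 1)) : ¬cs.IsRightDescent (u j) a := by
  intro hdesc
  by_cases haj : a = iseq j
  · subst haj
    exact cs.not_isRightDescent_of_mem_parabolic
      (simple_not_mem_parabolic cs ρ hrefl hpair (hcα _)) (hmem j hj) hdesc
  · have hv := mul_mem (hmem j hj) (cs.simple_mem_parabolic haj)
    have := hshort j hj _ hv (by
      rw [map_mul, LinearEquiv.mul_apply, simple_apply_coweight_of_ne cs ρ hrefl hpair ha])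
    rw [IsRightDescent] at hdesc
    omega

theorem not_isLeftDescent_factor (hrefl : ∀ i v, ρ (s i) v = v - rt i v • cα i)
    (hpair : ∀ i j, rt j (ω i) = if i = j then 1 else 0) (hcα : ∀ i, cα i ≠ 0)
    (hmem : ∀ j, 1 ≤ j → u j ∈ cs.parabolic {i | i ≠ iseq j})
    (hshort : ∀ j, 1 ≤ j → ∀ v ∈ cs.parabolic {i | i ≠ iseq j},
      ρ v (ω (iseq (j - 1))) = ρ (u j) (ω (iseq (j - 1))) → ℓ (u j) ≤ ℓ v)
    (hu1 : ρ (u 1) (ω (iseq 0)) = -ω (iseq 2) + ω (iseq 1))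
    (huj : ∀ j, 2 ≤ j → j ≤ c →
      ρ (u j) (ω (iseq (j - 1))) = -ω (iseq (j + 1)) + (2 : K) • ω (iseq j))
    {j : ℕ} (hj : 1 ≤ j) (hjc : j ≤ c) {a : B} (ha : a ≠ iseq (j + 1)) :
    ¬cs.IsLeftDescent (u j) a := by
  intro hdesc
  by_cases haj : a = iseq j
  · subst haj
    exact cs.not_isLeftDescent_of_mem_parabolic
      (simple_not_mem_parabolic cs ρ hrefl hpair (hcα _)) (hmem j hj) hdesc
  · obtain ⟨x, hx⟩ : ∃ x : K,
        ρ (u j) (ω (iseq (j - 1))) = -ω (iseq (j + 1)) + x • ω (iseq j) := by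
      rcases (by omega : j = 1 ∨ 2 ≤ j) with rfl | h2
      · exact ⟨1, by simpa using hu1⟩
      · exact ⟨2, huj j h2 hjc⟩
    have hv := mul_mem (cs.simple_mem_parabolic haj) (hmem j hj)
    have := hshort j hj _ hv (by
      rw [map_mul, LinearEquiv.mul_apply, hx, map_add, map_neg, map_smul,
        simple_apply_coweight_of_ne cs ρ hrefl hpair ha,
        simple_apply_coweight_of_ne cs ρ hrefl hpair haj])
    rw [IsLeftDescent] at hdesc
    omega

theorem prodU_mul_inv_apply_coweight (hrefl : ∀ i v, ρ (s i) v = v - rt i v • cα i)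
    (hpair : ∀ i j, rt j (ω i) = if i = j then 1 else 0)
    (hmem : ∀ j, 1 ≤ j → u j ∈ cs.parabolic {i | i ≠ iseq j})
    (huj : ∀ j, 2 ≤ j → j ≤ c →
      ρ (u j) (ω (iseq (j - 1))) = -ω (iseq (j + 1)) + (2 : K) • ω (iseq j))
    (q : ℕ) {n : ℕ} (hn : q + 1 + n ≤ c) :
    ρ (prodU u (q + 1 + n) * (prodU u (q + 1))⁻¹) (ω (iseq (q + 1))) =
      ((n : K) + 1) • ω (iseq (q + 1 + n)) - (n : K) • ω (iseq (q + 1 + n + 1)) := by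
  induction n with
  | zero => simp
  | succ n ih =>
    have hfix :=
      apply_coweight_of_mem_parabolic cs ρ hrefl hpair (hmem (q + 1 + n + 1) (by omega))
    have hact := huj (q + 1 + n + 1) (by omega) (by omega)
    rw [Nat.add_sub_cancel] at hact
    rw [← add_assoc, prodU, mul_assoc, map_mul, LinearEquiv.mul_apply, ih (by omega), map_sub,
      map_smul, map_smul, hfix, hact]
    push_cast
    module

theorem not_isLeftDescent_prodU [CharZero K] (hrefl : ∀ i v, ρ (s i) v = v - rt i v • cα i)
    (hpair : ∀ i j, rt j (ω i) = if i = j then 1 else 0) (hcα : ∀ i, cα i ≠ 0)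
    (hmem : ∀ j, 1 ≤ j → u j ∈ cs.parabolic {i | i ≠ iseq j})
    (hshort : ∀ j, 1 ≤ j → ∀ v ∈ cs.parabolic {i | i ≠ iseq j},
      ρ v (ω (iseq (j - 1))) = ρ (u j) (ω (iseq (j - 1))) → ℓ (u j) ≤ ℓ v)
    (hu1 : ρ (u 1) (ω (iseq 0)) = -ω (iseq 2) + ω (iseq 1))
    (huj : ∀ j, 2 ≤ j → j ≤ c →
      ρ (u j) (ω (iseq (j - 1))) = -ω (iseq (j + 1)) + (2 : K) • ω (iseq j))
    {j : ℕ} (hjc : j ≤ c) {a : B} (ha : a ≠ iseq (j + 1)) : ¬cs.IsLeftDescent (prodU u j) a := by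
  induction j using Nat.strong_induction_on generalizing a with
  | _ j ih =>
  intro hdesc
  obtain _ | m := j
  · exact cs.not_isLeftDescent_one a hdesc
  have hadd : ∀ q ≤ m, ∀ x ∈ cs.parabolic {i | i ≠ iseq (q + 1)},
      ℓ (x * prodU u q) = ℓ x + ℓ (prodU u q) := fun q hq _ hx =>
    cs.length_mul_eq_add_of_forall_not_isLeftDescent (fun _ hb => ih q (by omega) (by omega) hb)
      hx
  by_cases ham : a = iseq (m + 1)
  · subst ham
    obtain ⟨q, hq, hinv⟩ := cs.exists_isLeftInversion_of_isLeftInversion_prodU u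
      (fun q hq => hadd q (by omega) _ (hmem (q + 1) (by omega)))
      ((cs.isLeftInversion_simple_iff_isLeftDescent _ _).mpr hdesc)
    have hfix := apply_coweight_of_mem_parabolic cs ρ hrefl hpair
      (cs.mem_parabolic_of_isLeftInversion (hmem (q + 1) (by omega)) hinv)
    have hroot := root_apply_eq_zero_of_conj_apply_eq cs ρ hrefl (hcα _) hfix
    obtain ⟨n, rfl⟩ : ∃ n, m = q + n := ⟨m - q, by omega⟩
    rw [show q + n + 1 = q + 1 + n by ring,
      prodU_mul_inv_apply_coweight cs ρ hrefl hpair hmem huj q (by omega)] at hroot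
    have hne := iseq_succ_ne cs ρ hrefl hpair hmem hu1 huj (j := q + 1 + n) (by omega) (by omega)
    simp only [map_sub, map_smul, hpair, if_neg hne, smul_eq_mul, mul_one, mul_zero,
      sub_zero, if_true] at hroot
    exact Nat.cast_add_one_ne_zero n hroot
  · apply not_isLeftDescent_factor cs ρ hrefl hpair hcα hmem hshort hu1 huj (by omega) hjc ha
    have h1 := hadd m le_rfl _ (hmem (m + 1) (by omega))
    have h2 := hadd m le_rfl _ (mul_mem (cs.simple_mem_parabolic ham) (hmem (m + 1) (by omega)))
    rw [IsLeftDescent, prodU, ← mul_assoc] at hdesc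
    rw [IsLeftDescent]
    omega

theorem not_isRightDescent_prodU [CharZero K] (hrefl : ∀ i v, ρ (s i) v = v - rt i v • cα i)
    (hpair : ∀ i j, rt j (ω i) = if i = j then 1 else 0) (hcα : ∀ i, cα i ≠ 0)
    (hmem : ∀ j, 1 ≤ j → u j ∈ cs.parabolic {i | i ≠ iseq j})
    (hshort : ∀ j, 1 ≤ j → ∀ v ∈ cs.parabolic {i | i ≠ iseq j},
      ρ v (ω (iseq (j - 1))) = ρ (u j) (ω (iseq (j - 1))) → ℓ (u j) ≤ ℓ v)
    (hu1 : ρ (u 1) (ω (iseq 0)) = -ω (iseq 2) + ω (iseq 1))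
    (huj : ∀ j, 2 ≤ j → j ≤ c →
      ρ (u j) (ω (iseq (j - 1))) = -ω (iseq (j + 1)) + (2 : K) • ω (iseq j))
    {j : ℕ} (hjc : j ≤ c) {i : B} (hi : i ≠ iseq 0) : ¬cs.IsRightDescent (prodU u j) i := by
  induction j with
  | zero => exact cs.not_isRightDescent_one i
  | succ m ih =>
  intro hdesc
  have hleft : ∀ a, a ≠ iseq (m + 1) → ¬cs.IsLeftDescent (prodU u m) a := fun _ ha =>
    not_isLeftDescent_prodU cs ρ hrefl hpair hcα hmem hshort hu1 huj (by omega) ha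
  have hadd : ∀ x ∈ cs.parabolic {i | i ≠ iseq (m + 1)},
      ℓ (x * prodU u m) = ℓ x + ℓ (prodU u m) := fun _ hx =>
    cs.length_mul_eq_add_of_forall_not_isLeftDescent hleft hx
  have hu := hmem (m + 1) (by omega)
  have hup : ℓ (prodU u m * s i) = ℓ (prodU u m) + 1 := by
    have := ih (by omega)
    rw [IsRightDescent] at this
    rcases cs.length_mul_simple (prodU u m) i with h | h <;> omega
  obtain ⟨a, ha, hda⟩ : ∃ a, a ≠ iseq (m + 1) ∧ cs.IsLeftDescent (prodU u m * s i) a := by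
    by_contra! hno
    have h1 := cs.length_mul_eq_add_of_forall_not_isLeftDescent (J := {i | i ≠ iseq (m + 1)})
      hno hu
    have h2 := hadd _ hu
    rw [IsRightDescent, prodU, mul_assoc] at hdesc
    omega
  have hcomm := cs.simple_mul_eq_mul_simple_of_isLeftDescent hup hda (hleft a ha)
  have hua : cs.IsRightDescent (u (m + 1)) a := by
    have h1 := hadd _ (mul_mem hu (cs.simple_mem_parabolic ha))
    have h2 := hadd _ hu
    rw [IsRightDescent, prodU, mul_assoc, ← hcomm, ← mul_assoc] at hdesc
    rw [IsRightDescent]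
    omega
  obtain rfl : a = iseq m := by
    by_contra h
    exact not_isRightDescent_factor cs ρ hrefl hpair hcα hmem hshort (by omega) h hua
  have hfix : ρ (s (iseq m)) (ρ (prodU u m) (ω (iseq 0))) = ρ (prodU u m) (ω (iseq 0)) := by
    rw [← LinearEquiv.mul_apply, ← map_mul, hcomm, map_mul, LinearEquiv.mul_apply,
      simple_apply_coweight_of_ne cs ρ hrefl hpair hi]
  have := root_apply_eq_zero_of_simple_apply_eq cs ρ hrefl (hcα _) hfix
  rw [root_apply_prodU_apply_coweight cs ρ hrefl hpair hmem hu1 huj (by omega)] at this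
  exact one_ne_zero this

end Representation

end CoxeterSystem

theorem stmt_13_general {n : ℕ} (M : CoxeterMatrix (Fin n)) {W : Type*} [Group W]
    (cs : CoxeterSystem M W)
    {V : Type*} [AddCommGroup V] [Module ℚ V]
    (ρ : W →* (V ≃ₗ[ℚ] V)) (hρ : Function.Injective ρ)
    (ω : Fin n → V) (cα : Fin n → V) (rt : Fin n → Module.Dual ℚ V)
    (hrefl : ∀ (i : Fin n) (v : V), ρ (cs.simple i) v = v - rt i v • cα i)
    (hpair : ∀ i j : Fin n, rt j (ω i) = if i = j then 1 else 0)
    (k : Fin n)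
    (cstar : ℕ)
    -- parabolic subgroups and their longest elements
    (Wp : Fin n → Subgroup W)
    (hWp : ∀ j, Wp j = Subgroup.closure (cs.simple '' {i : Fin n | i ≠ j}))
    (w₀p : Fin n → W)
    -- the index sequence
    (iseq : ℕ → Fin n) (hiseq0 : iseq 0 = k)
    -- the elements `u_{i_j}`, shortest in `W_{i_j}` realizing the action of `w₀_{i_j}`
    (u : ℕ → W)
    (hu : ∀ j : ℕ, 1 ≤ j →
      u j ∈ Wp (iseq j)
      ∧ ρ (u j) (ω (iseq (j - 1))) = ρ (w₀p (iseq j)) (ω (iseq (j - 1)))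
      ∧ ∀ v ∈ Wp (iseq j),
          ρ v (ω (iseq (j - 1))) = ρ (w₀p (iseq j)) (ω (iseq (j - 1))) →
          cs.length (u j) ≤ cs.length v)
    -- the assumed identities
    (hid1 : ρ (w₀p (iseq 1)) (ω k) = -(ω (iseq 2)) + ω (iseq 1))
    (hidj : ∀ j : ℕ, 2 ≤ j → j ≤ cstar →
      ρ (w₀p (iseq j)) (ω (iseq (j - 1))) = -(ω (iseq (j + 1))) + (2 : ℚ) • ω (iseq j)) :
    ∀ j : ℕ, 1 ≤ j → j ≤ cstar →
      (∀ i : Fin n, i ≠ k →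
        cs.length (prodU u j) < cs.length (prodU u j * cs.simple i))
      ∧ ρ (prodU u j) (ω k) = -(ω (iseq (j + 1))) + ω (iseq j) := by
  subst hiseq0
  have hmem : ∀ j, 1 ≤ j → u j ∈ cs.parabolic {i | i ≠ iseq j} := fun j hj => by
    have h := (hu j hj).1
    rw [hWp] at h
    exact h
  have hshort : ∀ j, 1 ≤ j → ∀ v ∈ cs.parabolic {i | i ≠ iseq j},
      ρ v (ω (iseq (j - 1))) = ρ (u j) (ω (iseq (j - 1))) → cs.length (u j) ≤ cs.length v :=
    fun j hj v hv hact => (hu j hj).2.2 v (by rw [hWp]; exact hv) (hact.trans (hu j hj).2.1)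
  have hu1 : ρ (u 1) (ω (iseq 0)) = -ω (iseq 2) + ω (iseq 1) := (hu 1 le_rfl).2.1.trans hid1
  have huj : ∀ j, 2 ≤ j → j ≤ cstar →
      ρ (u j) (ω (iseq (j - 1))) = -ω (iseq (j + 1)) + (2 : ℚ) • ω (iseq j) :=
    fun j hj hjc => (hu j (by omega)).2.1.trans (hidj j hj hjc)
  have hcα := cs.coroot_ne_zero ρ hρ hrefl
  intro j hj hjc
  refine ⟨fun i hi => ?_, cs.prodU_apply_coweight ρ hrefl hpair hmem hu1 huj hj hjc⟩
  have hnd := cs.not_isRightDescent_prodU ρ hrefl hpair hcα hmem hshort hu1 huj hjc hi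
  rw [CoxeterSystem.IsRightDescent, not_lt] at hnd
  exact lt_of_le_of_ne hnd (cs.length_mul_simple_ne _ _).symm

/-- Let `k` be a minuscule index, fix `𝔦 ≠ k`, and define the index
sequence `i₀ = k`, `i₁ = σ_{i₀}(𝔦)`, `i_j = σ_{i_{j-1}}(i_{j-2})`, where `σ_j` is the
Dynkin involution of the diagram with node `j` deleted.  For `j ≥ 1` let `u_{i_j}` be
the shortest element of `W_{i_j}` with `u_{i_j}(ω_{i_{j-1}}^∨) = w₀_{i_j}(ω_{i_{j-1}}^∨)`.
Assume the identities `w₀_{i₀}(ω_𝔦^∨) = -ω_{i₁}^∨ + c ω_{i₀}^∨` (where `c = ⟨ω_𝔦^∨, θ⟩`),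
`w₀_{i₁}(ω_{i₀}^∨) = -ω_{i₂}^∨ + ω_{i₁}^∨`,
`w₀_{i_j}(ω_{i_{j-1}}^∨) = -ω_{i_{j+1}}^∨ + 2ω_{i_j}^∨` for `2 ≤ j ≤ c`, and
`u_{i_j}(ω_{i_j}^∨) = ω_{i_j}^∨`.  Then for every `1 ≤ j ≤ c`, the product
`u_{i_j} ⋯ u_{i_1}` is a minimal-length coset representative in `W/W_k` and
`u_{i_j} ⋯ u_{i_1}(ω_k^∨) = -ω_{i_{j+1}}^∨ + ω_{i_j}^∨`. -/
theorem stmt_13 {n : ℕ} (M : CoxeterMatrix (Fin n)) {W : Type*} [Group W]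
    (cs : CoxeterSystem M W) [Finite W]
    {V : Type*} [AddCommGroup V] [Module ℚ V]
    (ρ : W →* (V ≃ₗ[ℚ] V)) (hρ : Function.Injective ρ)
    (ω : Fin n → V) (cα : Fin n → V) (rt : Fin n → Module.Dual ℚ V)
    (hrefl : ∀ (i : Fin n) (v : V), ρ (cs.simple i) v = v - rt i v • cα i)
    (hpair : ∀ i j : Fin n, rt j (ω i) = if i = j then 1 else 0)
    -- the roots, highest root `θ`, and minusculity of `k`
    (R : Set (Module.Dual ℚ V)) (hRs : ∀ i, rt i ∈ R)
    (θ : Module.Dual ℚ V) (hθR : θ ∈ R)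
    (hθdom : ∀ β ∈ R, ∃ c : Fin n → ℚ, (∀ i, 0 ≤ c i) ∧ θ - β = ∑ i, c i • rt i)
    (k : Fin n)
    (hmin : ∀ β ∈ R, β (ω k) = -1 ∨ β (ω k) = 0 ∨ β (ω k) = 1)
    (𝔦 : Fin n) (h𝔦 : 𝔦 ≠ k)
    (cstar : ℕ) (hcstar : θ (ω 𝔦) = (cstar : ℚ))        -- `c = ⟨ω_𝔦^∨, θ⟩`
    -- parabolic subgroups and their longest elements
    (Wp : Fin n → Subgroup W)
    (hWp : ∀ j, Wp j = Subgroup.closure (cs.simple '' {i : Fin n | i ≠ j}))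
    (w₀p : Fin n → W) (hw₀p_mem : ∀ j, w₀p j ∈ Wp j)
    (hw₀p : ∀ j, ∀ u ∈ Wp j, cs.length u ≤ cs.length (w₀p j))
    -- Dynkin involutions `σ j` of the diagram with node `j` deleted
    (σ : Fin n → Fin n → Fin n) (hσj : ∀ j, σ j j = j)
    (hσ : ∀ j i : Fin n, i ≠ j → w₀p j * cs.simple i * (w₀p j)⁻¹ = cs.simple (σ j i))
    -- the index sequence
    (iseq : ℕ → Fin n) (hiseq0 : iseq 0 = k) (hiseq1 : iseq 1 = σ k 𝔦)
    (hiseqrec : ∀ j : ℕ, iseq (j + 2) = σ (iseq (j + 1)) (iseq j))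
    -- the elements `u_{i_j}`, shortest in `W_{i_j}` realizing the action of `w₀_{i_j}`
    (u : ℕ → W)
    (hu : ∀ j : ℕ, 1 ≤ j →
      u j ∈ Wp (iseq j)
      ∧ ρ (u j) (ω (iseq (j - 1))) = ρ (w₀p (iseq j)) (ω (iseq (j - 1)))
      ∧ ∀ v ∈ Wp (iseq j),
          ρ v (ω (iseq (j - 1))) = ρ (w₀p (iseq j)) (ω (iseq (j - 1))) →
          cs.length (u j) ≤ cs.length v)
    -- the assumed identities
    (hid0 : ρ (w₀p k) (ω 𝔦) = -(ω (iseq 1)) + (cstar : ℚ) • ω k)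
    (hid1 : ρ (w₀p (iseq 1)) (ω k) = -(ω (iseq 2)) + ω (iseq 1))
    (hidj : ∀ j : ℕ, 2 ≤ j → j ≤ cstar →
      ρ (w₀p (iseq j)) (ω (iseq (j - 1))) = -(ω (iseq (j + 1))) + (2 : ℚ) • ω (iseq j))
    (hfix : ∀ j : ℕ, ρ (u j) (ω (iseq j)) = ω (iseq j)) :
    ∀ j : ℕ, 1 ≤ j → j ≤ cstar →
      (∀ i : Fin n, i ≠ k →
        cs.length (prodU u j) < cs.length (prodU u j * cs.simple i))
      ∧ ρ (prodU u j) (ω k) = -(ω (iseq (j + 1))) + ω (iseq j) :=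
  stmt_13_general M cs ρ hρ ω cα rt hrefl hpair k cstar Wp hWp w₀p iseq hiseq0 u hu hid1 hidj
end

section
/- Let $P$ be the heap (labeled poset) of a fully commutative element $w$ of a Coxeter group $W$. Then the map sending a linear extension of $P$ to the word formed by the labels (read from the greatest element to the least) gives a reduced expression for $w$, and all linear extensions yield reduced expressions of the same element $w$; in particular $\ell(w)$ equals the number of elements of $P$. -/
section aux

variable {n : ℕ} {M : CoxeterMatrix (Fin n)} {W : Type*} [Group W] (cs : CoxeterSystem M W)

lemma comm2 {a b : Fin n} (h : M a b = 2) :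
    cs.simple a * cs.simple b = cs.simple b * cs.simple a := by
  have h1 := cs.simple_mul_simple_pow a b
  rw [h, pow_two] at h1
  have h2 : cs.simple a * cs.simple b = (cs.simple a * cs.simple b)⁻¹ :=
    eq_inv_of_mul_eq_one_left h1
  rw [h2, mul_inv_rev, cs.inv_simple, cs.inv_simple]

lemma pull : ∀ (L : ℕ) (g : Fin (L + 1) → Fin n) (k : Fin (L + 1)),
    (∀ j, j < k → cs.simple (g j) * cs.simple (g k) = cs.simple (g k) * cs.simple (g j)) →
    cs.wordProd (List.ofFn g) =
      cs.simple (g k) * cs.wordProd (List.ofFn (g ∘ k.succAbove)) := by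
  intro L
  induction L with
  | zero =>
    intro g k _
    have hk : k = 0 := Fin.fin_one_eq_zero k
    subst hk
    simp [cs.wordProd_cons, List.ofFn_succ]
  | succ L ih =>
    intro g k hc
    cases k using Fin.cases with
    | zero =>
      rw [List.ofFn_succ, cs.wordProd_cons]
      rfl
    | succ k' =>
      have h0 : cs.wordProd (List.ofFn g) =
          cs.simple (g 0) * cs.wordProd (List.ofFn (g ∘ Fin.succ)) := by
        rw [List.ofFn_succ, cs.wordProd_cons]; rfl
      have hIH := ih (g ∘ Fin.succ) k' (fun j hj =>
        hc j.succ (Fin.succ_lt_succ_iff.mpr hj))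
      have hcomm := hc 0 (Fin.succ_pos k')
      have htail : List.ofFn (g ∘ k'.succ.succAbove) =
          g 0 :: List.ofFn ((g ∘ Fin.succ) ∘ k'.succAbove) := by
        rw [List.ofFn_succ]
        refine congrArg₂ List.cons ?_ (congrArg List.ofFn ?_)
        · simp
        · funext i
          simp [Function.comp, Fin.succ_succAbove_succ]
      rw [h0, hIH, htail, cs.wordProd_cons]
      simp only [Function.comp_apply]
      rw [← mul_assoc, ← mul_assoc, hcomm]

lemma keyB : ∀ (L : ℕ) (g : Fin L → Fin n) (f : Fin L ≃ Fin L),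
    (∀ m m' : Fin L, m < m' → f m' < f m → M (g (f m')) (g (f m)) = 2) →
    cs.wordProd (List.ofFn (fun m => g (f m))) = cs.wordProd (List.ofFn g) := by
  intro L
  induction L with
  | zero => intro g f _; simp
  | succ L ih =>
    intro g f hf
    set k : Fin (L + 1) := f 0 with hk
    have hc : ∀ j : Fin (L + 1), j < k →
        cs.simple (g j) * cs.simple (g k) = cs.simple (g k) * cs.simple (g j) := by
      intro j hj
      have hm : (0 : Fin (L + 1)) < f.symm j := by
        apply Fin.pos_iff_ne_zero.mpr
        intro h
        have hjk : j = k := by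
          calc j = f (f.symm j) := (f.apply_symm_apply j).symm
          _ = f 0 := by rw [h]
          _ = k := hk.symm
        exact lt_irrefl k (hjk ▸ hj)
      have h2 := hf 0 (f.symm j) hm (by rw [f.apply_symm_apply]; exact hj)
      rw [f.apply_symm_apply] at h2
      exact comm2 cs h2
    rw [pull cs L g k hc]
    -- split LHS
    rw [List.ofFn_succ, cs.wordProd_cons]
    congr 1
    -- the induced equiv on Fin L
    set e : Option (Fin L) ≃ Option (Fin L) :=
      (finSuccEquiv' (0 : Fin (L + 1))).symm.trans (f.trans (finSuccEquiv' k)) with he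
    have hne : ∀ m : Fin L, f m.succ ≠ k := by
      intro m h
      have := f.injective h
      exact (Fin.succ_ne_zero m) this
    have hesome : ∀ m : Fin L, e (some m) = finSuccEquiv' k (f m.succ) := by
      intro m
      simp only [he, Equiv.trans_apply, finSuccEquiv'_symm_some, Fin.zero_succAbove]
    have hex : ∀ m : Fin L, ∃ j, e (some m) = some j := by
      intro m
      rw [hesome m]
      rcases h : finSuccEquiv' k (f m.succ) with _ | j
      · exfalso
        apply hne m
        have := congrArg (finSuccEquiv' k).symm h
        rwa [Equiv.symm_apply_apply, finSuccEquiv'_symm_none] at this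
      · exact ⟨j, rfl⟩
    set f' : Fin L ≃ Fin L := e.removeNone with hf'
    have hkey : ∀ m : Fin L, k.succAbove (f' m) = f m.succ := by
      intro m
      have h1 : some (f' m) = e (some m) := Equiv.removeNone_some e (hex m)
      rw [hesome m] at h1
      have := congrArg (finSuccEquiv' k).symm h1
      rwa [finSuccEquiv'_symm_some, Equiv.symm_apply_apply] at this
    have hcond : ∀ m m' : Fin L, m < m' → f' m' < f' m →
        M ((g ∘ k.succAbove) (f' m')) ((g ∘ k.succAbove) (f' m)) = 2 := by
      intro m m' hmm hff
      have h1 : f m'.succ < f m.succ := by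
        rw [← hkey m, ← hkey m']
        exact Fin.succAbove_lt_succAbove_iff.mpr hff
      have h2 := hf m.succ m'.succ (Fin.succ_lt_succ_iff.mpr hmm) h1
      simpa only [Function.comp, hkey] using h2
    have := ih (g ∘ k.succAbove) f' hcond
    rw [← this]
    refine congrArg cs.wordProd (congrArg List.ofFn ?_)
    funext m
    simp only [Function.comp_apply]
    rw [hkey m]

end aux




/-- Let `ω` be a reduced word for a fully commutative element `w` of a
Coxeter group `W` (full commutativity: any reduced word for `w` is obtained from `ω`
using only commutation moves).  Form the heap of `w`: the partial order on the positions
of `ω` generated by `p ≺ q` whenever `p` comes before `q` and the corresponding letters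
do not commute (equal letters included), earlier positions being greater.  Then for every
linear extension of the heap, the word formed by the labels read from the greatest
element to the least is a reduced expression for `w`; in particular `ℓ(w)` equals the
number of elements of the heap. -/
theorem stmt_18 {n : ℕ} (M : CoxeterMatrix (Fin n)) {W : Type*} [Group W]
    (cs : CoxeterSystem M W)
    (ω : List (Fin n)) (hred : cs.IsReduced ω)
    (w : W) (hw : w = cs.wordProd ω)
    -- `w` is fully commutative: every reduced word of `w` is reachable from `ω`
    -- by commutation moves
    (hfc : ∀ l : List (Fin n), cs.IsReduced l → cs.wordProd l = w →
      Relation.ReflTransGen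
        (fun l₁ l₂ => ∃ (u v : List (Fin n)) (a b : Fin n),
          M a b = 2 ∧ l₁ = u ++ a :: b :: v ∧ l₂ = u ++ b :: a :: v) ω l) :
    (∀ e : Fin ω.length ≃ Fin ω.length,
      -- `e` is a linear extension of the heap order on positions
      (∀ p q : Fin ω.length,
        Relation.ReflTransGen
          (fun a b : Fin ω.length => (a : ℕ) < (b : ℕ) ∧ M (ω.get a) (ω.get b) ≠ 2) p q →
        e p ≤ e q) →
      cs.IsReduced (List.ofFn (fun m => ω.get (e.symm m))) ∧
        cs.wordProd (List.ofFn (fun m => ω.get (e.symm m))) = w)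
    ∧ cs.length w = ω.length := by
  have hlen : cs.length w = ω.length := by rw [hw]; exact hred
  refine ⟨?_, hlen⟩
  intro e he
  have hcond : ∀ m m' : Fin ω.length, m < m' → e.symm m' < e.symm m →
      M (ω.get (e.symm m')) (ω.get (e.symm m)) = 2 := by
    intro m m' hmm hss
    by_contra h
    have hstep := he (e.symm m') (e.symm m)
      (Relation.ReflTransGen.single ⟨hss, h⟩)
    rw [e.apply_symm_apply, e.apply_symm_apply] at hstep
    exact absurd hmm (not_lt.mpr hstep)
  have hprod : cs.wordProd (List.ofFn (fun m => ω.get (e.symm m))) = w := by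
    have := keyB cs ω.length ω.get e.symm hcond
    rw [this, List.ofFn_get, hw]
  refine ⟨?_, hprod⟩
  unfold CoxeterSystem.IsReduced
  rw [hprod, hlen, List.length_ofFn]
end
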